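/- arXiv:2508.07471 — 12 statements merged into one kernel-verified Lean document; each statement's English description precedes it below -/
import Mathlib

section
/- Fix an integer n ≥ 3 and reals w_e, w_i^e, w_e^i, w_i, w_i^i with w_e ≠ 1, 1 − w_i + w_i^i ≠ 0, and D := w_e^i·w_i^e·(n−1) + (1−w_e)·(−1 + w_i + w_i^i·(n−2)) ≠ 0. With γ = (−w_e^i·w_i^e − w_i^i·(1−w_e))/((1−w_i+w_i^i)·D) and β = 1/(1−w_i+w_i^i), set γ̃ = w_e^i·w_i^e·(n−2) + (1−w_e)·(−1 + w_i + w_i^i·(n−3)) and β̃ = (1−w_i+w_i^i)·D. Then γ + β = γ̃/β̃. Consequently, for any j ∈ {2,…,n} and α = w_e^i/D, the j-th fixed-point coordinate x*_j(θ_j) = (γ+β)·θ_j + γ·Σ_{k=2, k≠j}^n θ_k − α·θ_1, viewed as a function of θ_j with all other inputs fixed, is strictly decreasing if and only if γ̃/β̃ < 0 (the paradoxical effect). -/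
/-- The paradoxical effect: `γ + β = γ̃/β̃`, and the `j`-th fixed-point coordinate as a
function of `θ j` is strictly decreasing iff `γ̃/β̃ < 0`. -/
theorem stmt_2 (n : ℕ) (hn : 3 ≤ n)
    (we wie wei wi wii : ℝ)
    (hwe : we ≠ 1) (h1 : 1 - wi + wii ≠ 0)
    (D : ℝ)
    (hD : D = wei * wie * ((n : ℝ) - 1) + (1 - we) * (-1 + wi + wii * ((n : ℝ) - 2)))
    (hD0 : D ≠ 0)
    (γ β : ℝ)
    (hγ : γ = (-(wei * wie) - wii * (1 - we)) / ((1 - wi + wii) * D))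
    (hβ : β = 1 / (1 - wi + wii))
    (γt βt : ℝ)
    (hγt : γt = wei * wie * ((n : ℝ) - 2) + (1 - we) * (-1 + wi + wii * ((n : ℝ) - 3)))
    (hβt : βt = (1 - wi + wii) * D) :
    γ + β = γt / βt ∧
    ∀ (θ : Fin n → ℝ) (i1 j : Fin n), (i1 : ℕ) = 0 → j ≠ i1 →
      ∀ α : ℝ, α = wei / D →
      (StrictAnti (fun t : ℝ => (γ + β) * t +
          γ * (∑ k ∈ Finset.univ.filter (fun k => k ≠ i1 ∧ k ≠ j), θ k) - α * θ i1) ↔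
        γt / βt < 0) := by
  have key : γ + β = γt / βt := by
    have hnum : γt = (-(wei * wie) - wii * (1 - we)) + D := by rw [hγt, hD]; ring
    rw [hγ, hβ, hβt, hnum]
    field_simp
  refine ⟨key, ?_⟩
  intro θ i1 j hi1 hj α hα
  rw [key]
  constructor
  · intro hsa
    have := hsa (show (0:ℝ) < 1 by norm_num)
    simp only [mul_one, mul_zero, zero_add] at this
    linarith
  · intro hneg a b hab
    simp only
    have : γt / βt * b < γt / βt * a := by
      exact (mul_lt_mul_left_of_neg hneg).mpr hab
    linarith
end

section
/- Let W_{12}, θ_1 ∈ ℝ and x_1^0, x_2^0 ∈ ℝ with x_2^0 > 0. Define x_1(t) = W_{12}·x_2^0·t·e^{−t} + (x_1^0 − θ_1)·e^{−t} + θ_1 and x_2(t) = x_2^0·e^{−t} for t ∈ ℝ. Suppose a, b ∈ ℝ with b > 0 and there exists t* ∈ ℝ with x_1(t*) = a and x_2(t*) = b. Then for every t ∈ ℝ, x_1(t) = ((a − θ_1)/b)·x_2(t) − W_{12}·x_2(t)·ln(x_2(t)/b) + θ_1. -/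
/-- Implicitization of a trajectory of the linear system `L_{1}` of the two-neuron
Binary Competition Model through a point `(a, b)`. -/
theorem stmt_3 (W12 θ1 x10 x20 : ℝ) (hx20 : 0 < x20)
    (x1 x2 : ℝ → ℝ)
    (hx1 : ∀ t, x1 t = W12 * x20 * t * Real.exp (-t) + (x10 - θ1) * Real.exp (-t) + θ1)
    (hx2 : ∀ t, x2 t = x20 * Real.exp (-t))
    (a b : ℝ) (hb : 0 < b)
    (hstar : ∃ ts : ℝ, x1 ts = a ∧ x2 ts = b) :
    ∀ t : ℝ, x1 t = ((a - θ1) / b) * x2 t - W12 * x2 t * Real.log (x2 t / b) + θ1 := by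
  obtain ⟨ts, ha, hbts⟩ := hstar
  intro t
  rw [hx1, hx2, ← ha, ← hbts, hx1, hx2]
  have hx20' : x20 ≠ 0 := ne_of_gt hx20
  have hets : Real.exp (-ts) ≠ 0 := Real.exp_ne_zero _
  have hlog : Real.log (x20 * Real.exp (-t) / (x20 * Real.exp (-ts))) = ts - t := by
    rw [mul_div_mul_left _ _ hx20', ← Real.exp_sub, Real.log_exp]
    ring
  rw [hlog]
  field_simp
  ring
end

section
/- Let W_{12}, W_{21} < 0 and θ_2 ≥ θ_1 > 0, and assume W_{21} < −θ_2/θ_1 and W_{12} < −θ_1/θ_2 (the bistable regime, so that W_{21}θ_1 + θ_2 < 0 and θ_1 + W_{12}θ_2 < 0). Then √(W_{12}/W_{21}) < (θ_1 + W_{12}θ_2)/(W_{21}θ_1 + θ_2) if and only if W_{21} > (θ_2/θ_1)²·W_{12}, and √(W_{12}/W_{21}) > (θ_1 + W_{12}θ_2)/(W_{21}θ_1 + θ_2) if and only if W_{21} < (θ_2/θ_1)²·W_{12}. -/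
/-- Which wall of the full-support chamber the stable manifold of the saddle point
crosses, in the bistable regime of the Binary Competition Model. -/
theorem stmt_5 (W12 W21 θ1 θ2 : ℝ) (h12 : W12 < 0) (h21 : W21 < 0)
    (hθ : θ1 ≤ θ2) (hθ1 : 0 < θ1)
    (hA : W21 < -θ2 / θ1) (hB : W12 < -θ1 / θ2) :
    (Real.sqrt (W12 / W21) < (θ1 + W12 * θ2) / (W21 * θ1 + θ2) ↔
      W21 > (θ2 / θ1) ^ 2 * W12) ∧
    (Real.sqrt (W12 / W21) > (θ1 + W12 * θ2) / (W21 * θ1 + θ2) ↔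
      W21 < (θ2 / θ1) ^ 2 * W12) := by
  have hθ2 : 0 < θ2 := lt_of_lt_of_le hθ1 hθ
  have hA' : W21 * θ1 < -θ2 := by
    have h := mul_lt_mul_of_pos_right hA hθ1
    rwa [div_mul_cancel₀ _ hθ1.ne'] at h
  have hB' : W12 * θ2 < -θ1 := by
    have h := mul_lt_mul_of_pos_right hB hθ2
    rwa [div_mul_cancel₀ _ hθ2.ne'] at h
  have hD : W21 * θ1 + θ2 < 0 := by linarith
  have hN : θ1 + W12 * θ2 < 0 := by linarith
  have hab : 1 < W12 * W21 := by
    nlinarith [mul_pos (show (0:ℝ) < -θ2 - W21 * θ1 by linarith)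
        (show (0:ℝ) < -θ1 - W12 * θ2 by linarith),
      mul_pos hθ1 hθ2,
      mul_lt_mul_of_pos_right hA' hθ1, mul_lt_mul_of_pos_right hB' hθ2]
  have hq : 0 < W12 / W21 := div_pos_iff.mpr (Or.inr ⟨h12, h21⟩)
  have hR : 0 < (θ1 + W12 * θ2) / (W21 * θ1 + θ2) :=
    div_pos_iff.mpr (Or.inr ⟨hN, hD⟩)
  -- rewrite everything in terms of positive quantities
  have hqeq : W12 / W21 = (-W12) / (-W21) := by rw [neg_div_neg_eq]
  have hReq : (θ1 + W12 * θ2) / (W21 * θ1 + θ2)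
      = (-(θ1 + W12 * θ2)) / (-(W21 * θ1 + θ2)) := by rw [neg_div_neg_eq]
  have hp : 0 < -W12 := by linarith
  have hq' : 0 < -W21 := by linarith
  have hn : 0 < -(θ1 + W12 * θ2) := by linarith
  have hd : 0 < -(W21 * θ1 + θ2) := by linarith
  have hrhs : ∀ x : ℝ, ((θ2 / θ1) ^ 2 * W12 < x ↔ W12 * θ2 ^ 2 < x * θ1 ^ 2) := by
    intro x
    rw [div_pow, div_mul_eq_mul_div, div_lt_iff₀ (by positivity), mul_comm (θ2 ^ 2) W12]
  have key : W12 / W21 < ((θ1 + W12 * θ2) / (W21 * θ1 + θ2)) ^ 2 ↔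
      W12 * θ2 ^ 2 < W21 * θ1 ^ 2 := by
    rw [hqeq, hReq, div_pow, div_lt_div_iff₀ hq' (by positivity)]
    constructor <;> intro h
    · by_contra hc
      push_neg at hc
      nlinarith [mul_nonneg (show (0:ℝ) ≤ W12 * W21 - 1 by linarith)
        (show (0:ℝ) ≤ W12 * θ2 ^ 2 - W21 * θ1 ^ 2 by linarith)]
    · nlinarith [mul_pos (show (0:ℝ) < W12 * W21 - 1 by linarith)
        (show (0:ℝ) < W21 * θ1 ^ 2 - W12 * θ2 ^ 2 by linarith)]
  have key2 : ((θ1 + W12 * θ2) / (W21 * θ1 + θ2)) ^ 2 < W12 / W21 ↔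
      W21 * θ1 ^ 2 < W12 * θ2 ^ 2 := by
    rw [hqeq, hReq, div_pow, div_lt_div_iff₀ (by positivity) hq']
    constructor <;> intro h
    · by_contra hc
      push_neg at hc
      nlinarith [mul_nonneg (show (0:ℝ) ≤ W12 * W21 - 1 by linarith)
        (show (0:ℝ) ≤ W21 * θ1 ^ 2 - W12 * θ2 ^ 2 by linarith)]
    · nlinarith [mul_pos (show (0:ℝ) < W12 * W21 - 1 by linarith)
        (show (0:ℝ) < W12 * θ2 ^ 2 - W21 * θ1 ^ 2 by linarith)]
  constructor
  · rw [Real.sqrt_lt' hR, key, gt_iff_lt, hrhs]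
  · have hrhs2 : ∀ x : ℝ, (x < (θ2 / θ1) ^ 2 * W12 ↔ x * θ1 ^ 2 < W12 * θ2 ^ 2) := by
      intro x
      rw [div_pow, div_mul_eq_mul_div, lt_div_iff₀ (by positivity), mul_comm (θ2 ^ 2) W12]
    rw [gt_iff_lt, Real.lt_sqrt hR.le, key2, hrhs2]
end

section
/- Let k_2 > 0 and q ≥ 0, and let S : ℝ → ℝ be measurable with S(x) ≥ 0 for all x ≥ 0, S integrable on [0, q], and S(x) = k_2·x for all x > q. Let A = {(x, y) ∈ ℝ² : 0 ≤ x and 0 ≤ y ≤ S(x)} and let λ denote two-dimensional Lebesgue measure. Then the limit lim_{B→∞} λ(A ∩ [0,B]²)/B² exists and equals 1 − 1/(2k_2) if k_2 > 1, and equals k_2/2 if k_2 ≤ 1. -/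
/-!
Off the strip `0 ≤ x ≤ q` the region coincides with the cone `{0 ≤ y ≤ k₂ x}`, and over the
strip both the region and the cone have finite area (`∫₀^q S` and `k₂ q² / 2`). Hence the areas
of the region and of the cone inside `[0, B]²` differ by `O(1)`, while the cone fills exactly
the fraction `coneFraction k₂` of every square `[0, B]²`.
-/

open MeasureTheory Filter Set Topology ENNReal

theorem volume_region_between_cc_eq_lintegral {α : Type*} [MeasurableSpace α] {μ : Measure α}
    {s : Set α} (hs : MeasurableSet s) {f g : α → ℝ} (hf : Measurable f) (hg : Measurable g) :
    μ.prod volume {p : α × ℝ | p.1 ∈ s ∧ p.2 ∈ Icc (f p.1) (g p.1)} =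
      ∫⁻ x in s, ENNReal.ofReal (g x - f x) ∂μ := by
  rw [Measure.prod_apply (measurableSet_region_between_cc hf hg hs), ← lintegral_indicator hs]
  congr 1 with x
  by_cases hx : x ∈ s
  · have hslice : Prod.mk x ⁻¹' {p : α × ℝ | p.1 ∈ s ∧ p.2 ∈ Icc (f p.1) (g p.1)} =
        Icc (f x) (g x) := by
      ext y; simp [hx]
    rw [hslice, Real.volume_Icc, indicator_of_mem hx]
  · simp [hx, Set.preimage]

theorem volume_subgraph_inter_square {f : ℝ → ℝ} (hf : Measurable f) (B : ℝ) :
    volume ({p : ℝ × ℝ | 0 ≤ p.1 ∧ 0 ≤ p.2 ∧ p.2 ≤ f p.1} ∩ Icc 0 B ×ˢ Icc 0 B) =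
      ∫⁻ x in Icc 0 B, ENNReal.ofReal (min (f x) B) := by
  have hregion := volume_region_between_cc_eq_lintegral (μ := volume)
    (measurableSet_Icc (a := 0) (b := B))
    (measurable_const (a := (0 : ℝ))) (hf.min (measurable_const (a := B)))
  simp only [sub_zero] at hregion
  rw [Measure.volume_eq_prod, ← hregion]
  congr 1 with ⟨x, y⟩
  simp only [mem_inter_iff, mem_ofPred_eq, mem_prod, mem_Icc, le_min_iff]
  tauto

/-- The fraction of each square `[0, B]²` lying below the line `y = k x`. -/
noncomputable def coneFraction (k : ℝ) : ℝ := if 1 < k then 1 - 1 / (2 * k) else k / 2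

theorem coneFraction_nonneg {k : ℝ} (hk : 0 < k) : 0 ≤ coneFraction k := by
  unfold coneFraction
  split_ifs with hk1
  · exact sub_nonneg.2 ((div_le_one (by positivity)).2 (by linarith))
  · positivity

theorem integral_min_mul_eq_coneFraction_mul_sq {k B : ℝ} (hk : 0 < k) (hB : 0 ≤ B) :
    ∫ x in 0..B, min (k * x) B = coneFraction k * B ^ 2 := by
  have hcont : Continuous fun x => min (k * x) B := by fun_prop
  unfold coneFraction
  split_ifs with hk1
  · have h0 : 0 ≤ B / k := div_nonneg hB hk.le
    have hBk : B / k ≤ B := div_le_self hB hk1.le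
    rw [← intervalIntegral.integral_add_adjacent_intervals (b := B / k)
      (hcont.intervalIntegrable _ _) (hcont.intervalIntegrable _ _)]
    have hleft : ∫ x in 0..B / k, min (k * x) B = ∫ x in 0..B / k, k * x := by
      refine intervalIntegral.integral_congr fun x hx => min_eq_left ?_
      rw [uIcc_of_le h0] at hx
      exact (le_div_iff₀' hk).1 hx.2
    have hright : ∫ x in B / k..B, min (k * x) B = ∫ x in B / k..B, B := by
      refine intervalIntegral.integral_congr fun x hx => min_eq_right ?_
      rw [uIcc_of_le hBk] at hx
      exact (div_le_iff₀' hk).1 hx.1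
    rw [hleft, hright, intervalIntegral.integral_const_mul, integral_id,
      intervalIntegral.integral_const, smul_eq_mul]
    field_simp
    ring
  · have h : ∫ x in 0..B, min (k * x) B = ∫ x in 0..B, k * x := by
      refine intervalIntegral.integral_congr fun x hx => min_eq_left ?_
      rw [uIcc_of_le hB] at hx
      nlinarith [hx.1, hx.2]
    rw [h, intervalIntegral.integral_const_mul, integral_id]
    ring

theorem setLIntegral_min_mul_eq_ofReal_coneFraction {k B : ℝ} (hk : 0 < k) (hB : 0 ≤ B) :
    ∫⁻ x in Icc 0 B, ENNReal.ofReal (min (k * x) B) =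
      ENNReal.ofReal (coneFraction k * B ^ 2) := by
  have hcont : Continuous fun x => min (k * x) B := by fun_prop
  have hnonneg : 0 ≤ᵐ[volume.restrict (Icc 0 B)] fun x => min (k * x) B := by
    filter_upwards [ae_restrict_mem measurableSet_Icc] with x hx
    exact le_min (mul_nonneg hk.le hx.1) hB
  rw [← ofReal_integral_eq_lintegral_ofReal hcont.integrableOn_Icc hnonneg,
    integral_Icc_eq_integral_Ioc, ← intervalIntegral.integral_of_le hB,
    integral_min_mul_eq_coneFraction_mul_sq hk hB]

theorem setLIntegral_Icc_min_le_of_eqOn {f g : ℝ → ℝ} {q : ℝ} (hfg : EqOn f g (Ioi q))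
    (B : ℝ) :
    ∫⁻ x in Icc 0 B, ENNReal.ofReal (min (f x) B) ≤
      (∫⁻ x in Icc 0 q, ENNReal.ofReal (f x)) +
        ∫⁻ x in Icc 0 B, ENNReal.ofReal (min (g x) B) := by
  have hcover : Icc 0 B ⊆ Icc 0 q ∪ (Icc 0 B ∩ Ioi q) := fun x hx => by
    rcases le_or_gt x q with hxq | hqx
    exacts [Or.inl ⟨hx.1, hxq⟩, Or.inr ⟨hx, hqx⟩]
  calc ∫⁻ x in Icc 0 B, ENNReal.ofReal (min (f x) B)
      ≤ ∫⁻ x in Icc 0 q ∪ (Icc 0 B ∩ Ioi q), ENNReal.ofReal (min (f x) B) :=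
        lintegral_mono_set hcover
    _ ≤ (∫⁻ x in Icc 0 q, ENNReal.ofReal (min (f x) B)) +
          ∫⁻ x in Icc 0 B ∩ Ioi q, ENNReal.ofReal (min (f x) B) :=
        lintegral_union_le _ _ _
    _ = (∫⁻ x in Icc 0 q, ENNReal.ofReal (min (f x) B)) +
          ∫⁻ x in Icc 0 B ∩ Ioi q, ENNReal.ofReal (min (g x) B) := by
        rw [setLIntegral_congr_fun (measurableSet_Icc.inter measurableSet_Ioi)
          fun x hx => by rw [hfg hx.2]]
    _ ≤ _ := by
        gcongr with x
        · exact min_le_left _ _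
        · exact inter_subset_left

theorem abs_toReal_sub_le_of_le_add {x c d : ℝ≥0∞} {r : ℝ} (hr : 0 ≤ r) (hc : c ≠ ∞)
    (hd : d ≠ ∞) (hup : x ≤ c + ENNReal.ofReal r) (hlow : ENNReal.ofReal r ≤ d + x) :
    |x.toReal - r| ≤ max c.toReal d.toReal := by
  have hx : x ≠ ∞ := ne_top_of_le_ne_top (add_ne_top.2 ⟨hc, ofReal_ne_top⟩) hup
  have hup' := toReal_mono (add_ne_top.2 ⟨hc, ofReal_ne_top⟩) hup
  have hlow' := toReal_mono (add_ne_top.2 ⟨hd, hx⟩) hlow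
  rw [toReal_add hc ofReal_ne_top, toReal_ofReal hr] at hup'
  rw [toReal_add hd hx, toReal_ofReal hr] at hlow'
  rw [abs_sub_le_iff]
  constructor <;> linarith [le_max_left c.toReal d.toReal, le_max_right c.toReal d.toReal]

theorem tendsto_div_sq_of_abs_sub_le {a : ℝ → ℝ} {L C : ℝ}
    (h : ∀ᶠ B in atTop, |a B - L * B ^ 2| ≤ C) :
    Tendsto (fun B => a B / B ^ 2) atTop (𝓝 L) := by
  have hsq : Tendsto (fun B : ℝ => B ^ 2) atTop atTop := tendsto_pow_atTop two_ne_zero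
  have herr : Tendsto (fun B => (a B - L * B ^ 2) / B ^ 2) atTop (𝓝 0) := by
    refine squeeze_zero_norm' ?_ ((tendsto_const_nhds (x := C)).div_atTop hsq)
    filter_upwards [h, eventually_ne_atTop 0] with B hB hB0
    have hpos := pow_two_pos_of_ne_zero hB0
    rw [norm_div, Real.norm_eq_abs, Real.norm_eq_abs, abs_of_pos hpos]
    exact div_le_div_of_nonneg_right hB hpos.le
  have hlim := (tendsto_const_nhds (x := L)).add herr
  rw [add_zero] at hlim
  refine hlim.congr' ?_
  filter_upwards [eventually_ne_atTop 0] with B hB0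
  field_simp
  ring

theorem stmt_6_general (k2 q : ℝ) (hk2 : 0 < k2)
    (S : ℝ → ℝ) (hmeas : Measurable S)
    (hint : IntegrableOn S (Set.Icc 0 q))
    (hlin : ∀ x, q < x → S x = k2 * x) :
    Tendsto
      (fun B : ℝ =>
        (volume ({p : ℝ × ℝ | 0 ≤ p.1 ∧ 0 ≤ p.2 ∧ p.2 ≤ S p.1} ∩
          Set.Icc 0 B ×ˢ Set.Icc 0 B)).toReal / B ^ 2)
      atTop
      (nhds (if 1 < k2 then 1 - 1 / (2 * k2) else k2 / 2)) := by
  set cS := ∫⁻ x in Icc 0 q, ENNReal.ofReal (S x)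
  set cK := ∫⁻ x in Icc 0 q, ENNReal.ofReal (k2 * x)
  have hcS : cS ≠ ∞ := hint.lintegral_lt_top.ne
  have hcK : cK ≠ ∞ := (continuous_const_mul k2).integrableOn_Icc.lintegral_lt_top.ne
  refine tendsto_div_sq_of_abs_sub_le (L := coneFraction k2) (C := max cS.toReal cK.toReal) ?_
  filter_upwards [eventually_ge_atTop 0] with B hB
  have hup := setLIntegral_Icc_min_le_of_eqOn (g := fun x => k2 * x) hlin B
  have hlow := setLIntegral_Icc_min_le_of_eqOn (f := fun x => k2 * x) (q := q)
    (fun x hx => (hlin x hx).symm) B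
  rw [setLIntegral_min_mul_eq_ofReal_coneFraction hk2 hB] at hup hlow
  rw [volume_subgraph_inter_square hmeas]
  exact abs_toReal_sub_le_of_le_add (by have := coneFraction_nonneg hk2; positivity)
    hcS hcK hup hlow

/-- Fractional area of the region below a curve that is eventually the line `y = k₂·x`. -/
theorem stmt_6 (k2 q : ℝ) (hk2 : 0 < k2) (hq : 0 ≤ q)
    (S : ℝ → ℝ) (hmeas : Measurable S) (hpos : ∀ x, 0 ≤ x → 0 ≤ S x)
    (hint : IntegrableOn S (Set.Icc 0 q))
    (hlin : ∀ x, q < x → S x = k2 * x) :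
    Tendsto
      (fun B : ℝ =>
        (volume ({p : ℝ × ℝ | 0 ≤ p.1 ∧ 0 ≤ p.2 ∧ p.2 ≤ S p.1} ∩
          Set.Icc 0 B ×ˢ Set.Icc 0 B)).toReal / B ^ 2)
      atTop
      (nhds (if 1 < k2 then 1 - 1 / (2 * k2) else k2 / 2)) :=
  stmt_6_general k2 q hk2 S hmeas hint hlin
end

section
/- Let n ∈ ℕ, let A be an n×n real matrix with nonnegative entries satisfying A^{m+1} = 0, and for k = 0,…,m set n_k = 𝟙ᵀA^k𝟙 (the sum of all entries of A^k, so n_0 = n). Then for every c ∈ ℝ, the characteristic polynomial of B = 𝟙𝟙ᵀ + c·A satisfies det(λI − B) = λ^{n−(m+1)}·(λ^{m+1} − Σ_{k=0}^{m} n_k·c^k·λ^{m−k}) as polynomials in λ. Moreover, if c < 0 and n_m > 0, then every real root of the polynomial λ^{m+1} − Σ_{k=0}^{m} n_k·c^k·λ^{m−k} is positive. -/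
/-!
Write `B = N + 𝟙𝟙ᵀ` with `N = c • A` nilpotent. It is easier to compute the reversed
characteristic polynomial `det (1 - X • B)`: since `N ^ (m + 1) = 0`, the matrix `1 - X • N` is
unipotent with inverse `∑_{k ≤ m} X ^ k • N ^ k`, so the matrix determinant lemma gives
`det (1 - X • B) = 1 - ∑_{k ≤ m} (𝟙ᵀ N ^ k 𝟙) X ^ (k + 1)`, and reflecting in degree `n` recovers
the characteristic polynomial.

For the roots: when `c < 0` and `λ ≤ 0`, every term `n_k c ^ k λ ^ (m - k)` has the sign of
`(-1) ^ m` while `λ ^ (m + 1)` has the opposite sign, and the term `n_m c ^ m` does not vanish.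
-/

open Polynomial Matrix Finset

theorem Polynomial.reflect_sum {R : Type*} [Semiring R] (s : Finset ℕ) (f : ℕ → R[X]) (d : ℕ) :
    (∑ k ∈ s, f k).reflect d = ∑ k ∈ s, (f k).reflect d :=
  map_sum ({ toFun := reflect d, map_zero' := reflect_zero, map_add' := (reflect_add · · d) } :
    R[X] →+ R[X]) f s

namespace Matrix

variable {R ι : Type*} [CommRing R] [Fintype ι]

theorem one_dotProduct_mulVec_one {α : Type*} [NonAssocSemiring α]
    (M : Matrix ι ι α) : 1 ⬝ᵥ M *ᵥ 1 = ∑ i, ∑ j, M i j := by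
  simp [mulVec, dotProduct]

variable [DecidableEq ι]

theorem charpoly_eq_X_pow_of_isNilpotent [IsDomain R] {N : Matrix ι ι R} (hN : IsNilpotent N) :
    N.charpoly = X ^ Fintype.card ι :=
  sub_eq_zero.mp (isNilpotent_charpoly_sub_pow_of_isNilpotent hN).eq_zero

theorem charpolyRev_eq_one_of_isNilpotent [IsDomain R] {N : Matrix ι ι R} (hN : IsNilpotent N) :
    N.charpolyRev = 1 := by
  rw [← reverse_charpoly, charpoly_eq_X_pow_of_isNilpotent hN, ← mul_one (X ^ _),
    reverse_X_pow_mul, ← C_1, reverse_C]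

theorem charpoly_eq_reflect_charpolyRev [Nontrivial R] (M : Matrix ι ι R) :
    M.charpoly = M.charpolyRev.reflect (Fintype.card ι) := by
  rw [← reverse_charpoly, reverse, charpoly_natDegree_eq_dim, reflect_reflect]

theorem charpolyRev_add_vecMulVec [IsDomain R] {N : Matrix ι ι R} {m : ℕ} (hN : N ^ (m + 1) = 0)
    (u v : ι → R) :
    (N + vecMulVec u v).charpolyRev =
      1 - ∑ k ∈ range (m + 1), C (v ⬝ᵥ N ^ k *ᵥ u) * X ^ (k + 1) := by
  set x : Matrix ι ι R[X] := (X : R[X]) • N.map C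
  have hx : x ^ (m + 1) = 0 := by
    rw [_root_.smul_pow, ← RingHom.mapMatrix_apply, ← map_pow, hN, map_zero, smul_zero]
  have hinv : (1 - x) * ∑ k ∈ range (m + 1), x ^ k = 1 := by
    rw [mul_neg_geom_sum, hx, sub_zero]
  have hdet : (1 - x).det = 1 := charpolyRev_eq_one_of_isNilpotent ⟨m + 1, hN⟩
  have hsplit : 1 - (X : R[X]) • (N + vecMulVec u v).map C =
      1 - x + replicateCol Unit (-(X : R[X]) • (C ∘ u)) * replicateRow Unit (C ∘ v) := by
    ext i j : 1
    simp only [x, sub_apply, add_apply, smul_apply, map_apply, mul_apply, vecMulVec_apply,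
      replicateCol_apply, replicateRow_apply, Pi.smul_apply, Function.comp_apply, univ_unique,
      sum_singleton, map_add, map_mul, smul_eq_mul]
    ring
  rw [charpolyRev, hsplit, det_add_replicateCol_mul_replicateRow (by simp [hdet]), hdet, one_mul,
    inv_eq_right_inv hinv, det_unique, add_apply, one_apply_eq, Matrix.mul_assoc,
    ← replicateCol_mulVec, replicateRow_mul_replicateCol_apply, sum_mulVec, dotProduct_sum,
    sub_eq_add_neg, ← sum_neg_distrib]
  congr 1
  refine sum_congr rfl fun k _ => ?_
  have hmap : (C ∘ v) ⬝ᵥ (N ^ k).map C *ᵥ (C ∘ u) = C (v ⬝ᵥ N ^ k *ᵥ u) := by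
    rw [RingHom.map_dotProduct]
    congr 1
    funext i
    exact (RingHom.map_mulVec C (N ^ k) u i).symm
  rw [_root_.smul_pow, ← RingHom.mapMatrix_apply, ← map_pow, RingHom.mapMatrix_apply, smul_mulVec,
    mulVec_smul, dotProduct_smul, dotProduct_smul, hmap, smul_eq_mul, smul_eq_mul]
  ring

theorem charpoly_add_vecMulVec_of_pow_eq_zero [IsDomain R] {N : Matrix ι ι R} {m : ℕ}
    (hN : N ^ (m + 1) = 0) (hm : m + 1 ≤ Fintype.card ι) (u v : ι → R) :
    (N + vecMulVec u v).charpoly = X ^ (Fintype.card ι - (m + 1)) *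
      (X ^ (m + 1) - ∑ k ∈ range (m + 1), C (v ⬝ᵥ N ^ k *ᵥ u) * X ^ (m - k)) := by
  rw [charpoly_eq_reflect_charpolyRev, charpolyRev_add_vecMulVec hN, reflect_sub, reflect_one,
    reflect_sum, mul_sub, ← pow_add, Nat.sub_add_cancel hm, mul_sum]
  congr 1
  refine sum_congr rfl fun k hk => ?_
  have hk : k ≤ m := Nat.lt_succ_iff.mp (mem_range.mp hk)
  rw [reflect_C_mul_X_pow, revAt_le (by omega), mul_left_comm, ← pow_add]
  congr 2
  omega

end Matrix

theorem neg_pow_mul_neg_pow_sub {R : Type*} [CommRing R] {k m : ℕ} (hk : k ≤ m) (a b : R) :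
    (-a) ^ k * (-b) ^ (m - k) = (-1) ^ m * (a ^ k * b ^ (m - k)) := by
  rw [neg_pow a, neg_pow b, ← Nat.add_sub_cancel' hk, pow_add, Nat.add_sub_cancel_left]
  ring

theorem pos_of_pow_succ_sub_sum_eq_zero {R : Type*} [CommRing R] [LinearOrder R]
    [IsStrictOrderedRing R] {m : ℕ} {a : ℕ → R} (ha : ∀ k, 0 ≤ a k) (ham : 0 < a m)
    {c : R} (hc : c < 0) {lam : R}
    (h : lam ^ (m + 1) - ∑ k ∈ range (m + 1), a k * c ^ k * lam ^ (m - k) = 0) : 0 < lam := by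
  by_contra! hlam
  obtain ⟨μ, hμ, rfl⟩ : ∃ μ, 0 ≤ μ ∧ lam = -μ := ⟨-lam, by linarith, by ring⟩
  obtain ⟨d, hd, rfl⟩ : ∃ d, 0 < d ∧ c = -d := ⟨-c, by linarith, by ring⟩
  set S := ∑ k ∈ range (m + 1), a k * d ^ k * μ ^ (m - k)
  have hS : 0 < S := by
    refine sum_pos' (fun k _ => by have := ha k; positivity) ⟨m, self_mem_range_succ m, ?_⟩
    rw [Nat.sub_self, pow_zero, mul_one]
    positivity
  have hsign : ∑ k ∈ range (m + 1), a k * (-d) ^ k * (-μ) ^ (m - k) = (-1) ^ m * S := by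
    rw [mul_sum]
    refine sum_congr rfl fun k hk => ?_
    rw [mul_assoc, neg_pow_mul_neg_pow_sub (Nat.lt_succ_iff.mp (mem_range.mp hk))]
    ring
  rw [hsign, neg_pow μ, pow_succ] at h
  have : (-1) ^ m * (μ ^ (m + 1) + S) = 0 := by linear_combination -h
  exact mul_ne_zero (pow_ne_zero m (by norm_num)) (by positivity) this

/-- Characteristic polynomial of `𝟙𝟙ᵀ + c·A` for a nilpotent nonnegative matrix `A`
(e.g. the adjacency matrix of a DAG with maximum path length `m`), and positivity of the
real roots of the nontrivial factor when `c < 0` and `n_m > 0`. -/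
theorem stmt_7 (n m : ℕ) (hm : m + 1 ≤ n)
    (A : Matrix (Fin n) (Fin n) ℝ)
    (hA : ∀ i j, 0 ≤ A i j) (hnil : A ^ (m + 1) = 0) (c : ℝ) :
    (Matrix.charpoly (Matrix.of (fun _ _ => (1 : ℝ)) + c • A) =
      Polynomial.X ^ (n - (m + 1)) *
        (Polynomial.X ^ (m + 1) - ∑ k ∈ Finset.range (m + 1),
          Polynomial.C ((∑ i, ∑ j, (A ^ k) i j) * c ^ k) * Polynomial.X ^ (m - k))) ∧
    ((c < 0 ∧ 0 < ∑ i, ∑ j, (A ^ m) i j) →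
      ∀ lam : ℝ,
        lam ^ (m + 1) -
          (∑ k ∈ Finset.range (m + 1), (∑ i, ∑ j, (A ^ k) i j) * c ^ k * lam ^ (m - k)) = 0 →
        0 < lam) := by
  refine ⟨?_, fun ⟨hc, hnm⟩ lam h => pos_of_pow_succ_sub_sum_eq_zero
    (fun k => sum_nonneg fun i _ => sum_nonneg fun j _ => pow_apply_nonneg hA k i j) hnm hc h⟩
  have hcA : (c • A) ^ (m + 1) = 0 := by rw [_root_.smul_pow, hnil, smul_zero]
  have hJ : (Matrix.of fun _ _ => 1 : Matrix (Fin n) (Fin n) ℝ) = vecMulVec 1 1 := by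
    ext i j
    simp [vecMulVec_apply]
  rw [hJ, add_comm, charpoly_add_vecMulVec_of_pow_eq_zero hcA (by simpa using hm), Fintype.card_fin]
  congr 2
  refine sum_congr rfl fun k _ => ?_
  rw [_root_.smul_pow, smul_mulVec, dotProduct_smul, one_dotProduct_mulVec_one, smul_eq_mul,
    mul_comm (c ^ k)]
end

section
/- Let A be an n×n real matrix with A^{m+1} = 0, let c ∈ ℝ, set n_k = 𝟙ᵀA^k𝟙 for k = 0,…,m, and let B = 𝟙𝟙ᵀ + c·A. Suppose λ ∈ ℝ, λ ≠ 0, satisfies λ^{m+1} = Σ_{k=0}^{m} n_k·c^k·λ^{m−k} (i.e., λ is a nonzero eigenvalue of B). Then the vector v = Σ_{k=0}^{m} (c/λ)^k·A^k·𝟙 satisfies B·v = λ·v; moreover the sum of the entries of v equals λ, so v ≠ 0. -/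
/-!
Put `z = c / λ`. Since `A` is nilpotent, the truncated series `v = ∑ₖ zᵏ Aᵏ 𝟙` satisfies
`z • A v + 𝟙 = v`. Dividing the characteristic equation by `λᵐ` turns it into `𝟙ᵀ v = λ`,
so `𝟙𝟙ᵀ v = λ 𝟙` and `B v = λ 𝟙 + λ z A v = λ v`; in particular `v ≠ 0` because `λ ≠ 0`.
-/

open Matrix Finset

namespace Matrix

theorem of_one_mulVec {κ ι R : Type*} [Fintype ι] [CommSemiring R] (v : ι → R) :
    of (fun (_ : κ) (_ : ι) => (1 : R)) *ᵥ v = (∑ j, v j) • 1 := by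
  ext i
  simp [mulVec, dotProduct]

variable {ι R : Type*} [Fintype ι] [DecidableEq ι]

/-- For the adjacency matrix of a DAG, entry `j` is the localized path polynomial `p_j(z)`. -/
def pathPolyVec [CommSemiring R] (A : Matrix ι ι R) (m : ℕ) (z : R) : ι → R :=
  ∑ k ∈ range (m + 1), z ^ k • (A ^ k) *ᵥ 1

theorem sum_pathPolyVec [CommSemiring R] (A : Matrix ι ι R) (m : ℕ) (z : R) :
    ∑ j, pathPolyVec A m z j = ∑ k ∈ range (m + 1), (∑ i, ∑ j, (A ^ k) i j) * z ^ k := by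
  simp only [pathPolyVec, Finset.sum_apply, Pi.smul_apply, smul_eq_mul, mulVec, dotProduct,
    Pi.one_apply, mul_one]
  rw [Finset.sum_comm]
  exact Finset.sum_congr rfl fun k _ => by rw [← Finset.mul_sum, mul_comm]

theorem smul_mulVec_pathPolyVec_add_one [CommSemiring R] {A : Matrix ι ι R} {m : ℕ}
    (hA : A ^ (m + 1) = 0) (z : R) :
    z • A *ᵥ pathPolyVec A m z + 1 = pathPolyVec A m z := by
  have hshift : z • A *ᵥ pathPolyVec A m z =
      ∑ k ∈ range (m + 1), z ^ (k + 1) • (A ^ (k + 1)) *ᵥ 1 := by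
    simp only [pathPolyVec, mulVec_sum, mulVec_smul, mulVec_mulVec, Finset.smul_sum, smul_smul,
      ← pow_succ']
  rw [hshift, pathPolyVec, sum_range_succ, hA, zero_mulVec, smul_zero, add_zero,
    sum_range_succ' _ m, pow_zero, pow_zero, one_mulVec, one_smul]

end Matrix

theorem sum_mul_div_pow_eq_of_pow_succ_eq {K : Type*} [Field K] {m : ℕ} {a : ℕ → K} {c lam : K}
    (hlam : lam ≠ 0)
    (h : lam ^ (m + 1) = ∑ k ∈ range (m + 1), a k * c ^ k * lam ^ (m - k)) :
    ∑ k ∈ range (m + 1), a k * (c / lam) ^ k = lam := by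
  have hscale : ∀ k ∈ range (m + 1),
      a k * c ^ k * lam ^ (m - k) = a k * (c / lam) ^ k * lam ^ m := by
    intro k hk
    rw [pow_sub₀ _ hlam (Nat.lt_succ_iff.mp (mem_range.mp hk)), div_pow]
    field_simp
  rw [sum_congr rfl hscale, ← sum_mul, pow_succ'] at h
  exact (mul_right_cancel₀ (pow_ne_zero m hlam) h).symm

/-- Eigenvectors of `B = 𝟙𝟙ᵀ + c·A` for nonzero eigenvalues, given in terms of the
localized path polynomials `v_j = p_j^G(c/λ)` (here `v = Σ_k (c/λ)^k A^k 𝟙`). -/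
theorem stmt_8 (n m : ℕ) (A : Matrix (Fin n) (Fin n) ℝ) (hnil : A ^ (m + 1) = 0)
    (c lam : ℝ) (hlam : lam ≠ 0)
    (heig : lam ^ (m + 1) =
      ∑ k ∈ Finset.range (m + 1), (∑ i, ∑ j, (A ^ k) i j) * c ^ k * lam ^ (m - k))
    (B : Matrix (Fin n) (Fin n) ℝ)
    (hB : B = Matrix.of (fun _ _ => (1 : ℝ)) + c • A)
    (v : Fin n → ℝ)
    (hv : v = ∑ k ∈ Finset.range (m + 1), (c / lam) ^ k • (A ^ k).mulVec (fun _ => (1 : ℝ))) :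
    B.mulVec v = lam • v ∧ (∑ j, v j) = lam ∧ v ≠ 0 := by
  set z := c / lam
  replace hv : v = pathPolyVec A m z := hv
  have hsum : ∑ j, v j = lam := by
    rw [hv, sum_pathPolyVec]
    exact sum_mul_div_pow_eq_of_pow_succ_eq hlam heig
  have hc : c = lam * z := (mul_div_cancel₀ c hlam).symm
  refine ⟨?_, hsum, fun h0 => hlam ?_⟩
  · calc B *ᵥ v = lam • (z • A *ᵥ v + 1) := by
          rw [hB, add_mulVec, of_one_mulVec, hsum, smul_mulVec, hc, smul_add, smul_smul,
            add_comm]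
      _ = lam • v := by rw [hv, smul_mulVec_pathPolyVec_add_one hnil]
  · simp [← hsum, h0]
end

section
/- Let G be a directed graph on {1,…,n} with no self-loops, let δ > 0 and 0 < ε < δ/(1+δ), and let W be the CTLN weight matrix of G. For distinct vertices i, j, the vector e_i − e_j satisfies (−I + W)(e_i − e_j) = δ·(e_i − e_j) if and only if G has neither an edge i→j nor an edge j→i and, for every vertex k ∉ {i, j}, G has an edge i→k iff it has an edge j→k. In particular, if G is a directed acyclic graph with two distinct sinks s_1 ≠ s_2, then (−I+W)(e_{s_1} − e_{s_2}) = δ·(e_{s_1} − e_{s_2}), so δ is an eigenvalue of −I+W. -/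
/-- `e_i − e_j` is a `δ`-eigenvector of `−I + W` (W the CTLN weight matrix of `G`) iff
`i, j` are independent and treat every other vertex identically; in particular `δ` is an
eigenvalue of `−I + W` for any DAG with two distinct sinks. -/
theorem stmt_9 (n : ℕ) (E : Fin n → Fin n → Prop) [DecidableRel E]
    (hloop : ∀ i, ¬ E i i)
    (δ ε : ℝ) (hδ : 0 < δ) (hε : 0 < ε) (hεδ : ε < δ / (1 + δ))
    (W : Matrix (Fin n) (Fin n) ℝ)
    (hW : ∀ i j, W i j = if i = j then 0 else if E j i then -1 + ε else -1 - δ) :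
    (∀ i j : Fin n, i ≠ j →
      ((-1 + W).mulVec (Pi.single i 1 - Pi.single j 1) =
          δ • (Pi.single i 1 - Pi.single j 1) ↔
        (¬ E i j ∧ ¬ E j i ∧ ∀ k, k ≠ i → k ≠ j → (E i k ↔ E j k)))) ∧
    ((∀ i, ¬ Relation.TransGen E i i) →
      ∀ s₁ s₂ : Fin n, s₁ ≠ s₂ → (∀ k, ¬ E s₁ k) → (∀ k, ¬ E s₂ k) →
        (-1 + W).mulVec (Pi.single s₁ 1 - Pi.single s₂ 1) =
            δ • (Pi.single s₁ 1 - Pi.single s₂ 1) ∧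
          Module.End.HasEigenvalue (Matrix.mulVecLin (-1 + W)) δ) := by
  have key : ∀ i j : Fin n, i ≠ j →
      ((-1 + W).mulVec (Pi.single i 1 - Pi.single j 1) =
          δ • (Pi.single i 1 - Pi.single j 1) ↔
        (¬ E i j ∧ ¬ E j i ∧ ∀ k, k ≠ i → k ≠ j → (E i k ↔ E j k))) := by
    intro i j hij
    have hmv : ∀ k, (-1 + W).mulVec (Pi.single i 1 - Pi.single j 1) k
        = (-1 + W) k i - (-1 + W) k j := by
      intro k
      rw [Matrix.mulVec_sub]
      simp [Matrix.mulVec_single]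
    have hMik : ∀ k l, (-1 + W : Matrix (Fin n) (Fin n) ℝ) k l
        = (if k = l then (-1:ℝ) else 0) + W k l := by
      intro k l
      simp [Matrix.add_apply, Matrix.neg_apply, Matrix.one_apply]
      split <;> simp
    have hrhs : ∀ k, (δ • (Pi.single i 1 - Pi.single j 1) : Fin n → ℝ) k
        = δ * ((if k = i then (1:ℝ) else 0) - (if k = j then (1:ℝ) else 0)) := by
      intro k
      simp [Pi.single_apply]
    rw [funext_iff]
    constructor
    · intro h
      have hi := h i
      have hj := h j
      rw [hmv, hrhs, hMik, hMik] at hi hj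
      rw [hW, hW] at hi
      rw [hW, hW] at hj
      simp [hij, hij.symm] at hi hj
      refine ⟨?_, ?_, ?_⟩
      · by_contra hE
        simp [hE] at hj; linarith
      · by_contra hE
        simp [hE] at hi; linarith
      · intro k hki hkj
        have hk := h k
        rw [hmv, hrhs, hMik, hMik] at hk
        rw [hW, hW] at hk
        simp [hki, hkj] at hk
        by_cases h1 : E i k <;> by_cases h2 : E j k <;> simp [h1, h2] at hk ⊢ <;> linarith
    · rintro ⟨h1, h2, h3⟩ k
      rw [hmv, hrhs, hMik, hMik, hW, hW]
      by_cases hki : k = i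
      · subst hki
        simp [hij, h2]
        try ring
      · by_cases hkj : k = j
        · subst hkj
          simp [Ne.symm hij, h1]
          try ring
        · have := h3 k hki hkj
          by_cases h1' : E i k <;> by_cases h2' : E j k <;>
            simp_all [hki, hkj] <;> ring_nf <;> linarith
  refine ⟨key, fun _ s₁ s₂ hne hs₁ hs₂ => ?_⟩
  have heq : (-1 + W).mulVec (Pi.single s₁ 1 - Pi.single s₂ 1) =
      δ • (Pi.single s₁ 1 - Pi.single s₂ 1) :=
    (key s₁ s₂ hne).2 ⟨hs₁ s₂, hs₂ s₁, fun k _ _ => by simp [hs₁ k, hs₂ k]⟩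
  refine ⟨heq, ?_⟩
  apply Module.End.hasEigenvalue_of_hasEigenvector (x := Pi.single s₁ 1 - Pi.single s₂ 1)
  constructor
  · rw [Module.End.mem_eigenspace_iff]
    rw [Matrix.mulVecLin_apply]
    exact heq
  · intro h
    have := congrFun h s₁
    simp [Pi.single_apply, hne, Ne.symm hne] at this
end

section
/- Let G be a directed acyclic graph on {1,…,n} with CTLN weight matrix W (parameters δ > 0, 0 < ε < δ/(1+δ), θ > 0), let σ ⊆ {1,…,n} be nonempty, let A_σ be the adjacency matrix of the induced subgraph G|_σ (indexed by σ, with (A_σ)_{ij} = 1 iff j→i in G|_σ), and let p_j^{G|σ}(z) = Σ_{k≥0} z^k·(A_σ^k𝟙)_j for j ∈ σ. Set β = −(ε+δ)/δ, assume −δ + (1+δ)·Σ_{j∈σ} p_j^{G|σ}(β) ≠ 0, and set Γ(σ) = θ/(−δ + (1+δ)·Σ_{j∈σ} p_j^{G|σ}(β)). Then the vector x* ∈ ℝ^n with x*_j = p_j^{G|σ}(β)·Γ(σ) for j ∈ σ and x*_j = 0 for j ∉ σ satisfies −x*_i + Σ_{j=1}^n W_{ij}·x*_j + θ = 0 for every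 i ∈ σ; i.e., x* is the fixed point of the linear system L_σ of the CTLN. -/
/-!
Acyclicity of `G|_σ` makes `A_σ` nilpotent, so the finite sum `p = ∑_{k<n} (β A_σ)^k 𝟙` solves
`p = 𝟙 + β A_σ p` exactly. On `σ` the weights are `W = (1+δ)(I - J) + (ε+δ) A_σ` with `J` the
all-ones matrix, and `(ε+δ) A_σ p = -δ β A_σ p = -δ (p - 𝟙)`; hence
`(-x* + W x*)_i = Γ (δ - (1+δ) ∑_j p_j) = -θ` for every `i ∈ σ`.
-/

open Finset Matrix

lemma Relation.transGen_of_rel_succ {α : Type*} {r : α → α → Prop} {g : ℕ → α} {k : ℕ}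
    (hg : ∀ l < k, r (g l) (g (l + 1))) {a b : ℕ} (hab : a < b) (hbk : b ≤ k) :
    Relation.TransGen r (g a) (g b) := by
  induction b, hab using Nat.le_induction with
  | base => exact .single (hg a (by omega))
  | succ b _ ih => exact (ih (by omega)).tail (hg b (by omega))

namespace Matrix

variable {m R : Type*} [Fintype m] [DecidableEq m] [Semiring R] {r : m → m → Prop}

lemma exists_rel_chain_of_pow_apply_ne_zero {A : Matrix m m R} (hA : ∀ i j, A i j ≠ 0 → r j i)
    {k : ℕ} {i j : m} (h : (A ^ k) i j ≠ 0) :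
    ∃ g : ℕ → m, g 0 = j ∧ g k = i ∧ ∀ l < k, r (g l) (g (l + 1)) := by
  induction k generalizing j with
  | zero =>
    obtain rfl : i = j := by_contra fun hij => h (by simp [one_apply_ne hij])
    exact ⟨fun _ => i, rfl, rfl, by simp⟩
  | succ k ih =>
    rw [pow_succ, mul_apply] at h
    obtain ⟨c, -, hc⟩ := exists_ne_zero_of_sum_ne_zero h
    obtain ⟨g, hg0, hgk, hg⟩ := ih (left_ne_zero_of_mul hc)
    refine ⟨fun l => if l = 0 then j else g (l - 1), by simp, by simpa using hgk, ?_⟩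
    rintro (_ | l) hl
    · simpa [hg0] using hA c j (right_ne_zero_of_mul hc)
    · simpa using hg l (by omega)

-- A nonzero entry of `A ^ card m` is a walk through `card m + 1` vertices, so one repeats.
lemma pow_card_eq_zero_of_acyclic (hr : ∀ i, ¬ Relation.TransGen r i i) {A : Matrix m m R}
    (hA : ∀ i j, A i j ≠ 0 → r j i) : A ^ Fintype.card m = 0 := by
  ext i j
  by_contra h
  obtain ⟨g, -, -, hg⟩ := exists_rel_chain_of_pow_apply_ne_zero hA h
  obtain ⟨a, b, hab, heq⟩ := Fintype.exists_ne_map_eq_of_card_lt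
    (fun l : Fin (Fintype.card m + 1) => g l) (by simp)
  rcases lt_or_gt_of_ne (Fin.val_ne_of_ne hab) with hlt | hlt
  · exact hr _ (heq ▸ Relation.transGen_of_rel_succ hg hlt (by omega))
  · exact hr _ (heq ▸ Relation.transGen_of_rel_succ hg hlt (by omega))

end Matrix

lemma Matrix.mulVec_geom_sum_eq_add {m R : Type*} [Fintype m] [DecidableEq m] [Ring R]
    {N : Matrix m m R} {n : ℕ} (hN : N ^ n = 0) (u : m → R) :
    (∑ k ∈ range n, N ^ k) *ᵥ u = u + N *ᵥ ((∑ k ∈ range n, N ^ k) *ᵥ u) := by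
  have h := mul_neg_geom_sum N n
  rw [hN, sub_zero, sub_mul, one_mul, sub_eq_iff_eq_add'] at h
  rw [mulVec_mulVec]
  nth_rw 1 [h]
  rw [add_mulVec, one_mulVec, add_comm]

lemma Finset.sum_mul_dite_mem {ι R : Type*} [Fintype ι] [DecidableEq ι] [NonUnitalNonAssocSemiring R]
    (σ : Finset ι) (f : ι → R) (y : σ → R) :
    ∑ j, f j * (if h : j ∈ σ then y ⟨j, h⟩ else 0) = ∑ j : σ, f j * y j := by
  rw [← sum_subset (subset_univ σ) (fun j _ hj => by simp [hj]), ← sum_coe_sort σ]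
  simp

section CTLN

variable {ι : Type*} [DecidableEq ι] {E : ι → ι → Prop} [DecidableRel E]
  {δ ε : ℝ} {W : Matrix ι ι ℝ}

lemma ctln_weight_eq (hE : ∀ i, ¬ E i i)
    (hW : ∀ i j, W i j = if i = j then 0 else if E j i then -1 + ε else -1 - δ) (i j : ι) :
    W i j = (1 + δ) * (if i = j then 1 else 0) - (1 + δ) + (ε + δ) * (if E j i then 1 else 0) := by
  rw [hW]
  by_cases hij : i = j
  · subst hij; simp [hE]
  · simp only [hij, if_false]; split_ifs <;> ring

lemma ctln_sum_weight_mul [Fintype ι] (hE : ∀ i, ¬ E i i)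
    (hW : ∀ i j, W i j = if i = j then 0 else if E j i then -1 + ε else -1 - δ)
    {σ : Finset ι} {A : Matrix σ σ ℝ} (hA : ∀ i j : σ, A i j = if E (j : ι) (i : ι) then 1 else 0)
    (y : σ → ℝ) (i : σ) :
    ∑ j : σ, W i j * y j = (1 + δ) * y i - (1 + δ) * ∑ j, y j + (ε + δ) * (A *ᵥ y) i := by
  simp only [ctln_weight_eq hE hW, mulVec, dotProduct, hA, Subtype.ext_iff.symm, add_mul, sub_mul,
    sum_add_distrib, sum_sub_distrib, mul_assoc, ← mul_sum, ite_mul, one_mul, zero_mul,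
    sum_ite_eq, mem_univ, if_true]

end CTLN

theorem stmt_11_general (n : ℕ) (E : Fin n → Fin n → Prop) [DecidableRel E]
    (hacyc : ∀ i, ¬ Relation.TransGen E i i)
    (δ ε θ : ℝ) (hδ : 0 < δ)
    (W : Matrix (Fin n) (Fin n) ℝ)
    (hW : ∀ i j, W i j = if i = j then 0 else if E j i then -1 + ε else -1 - δ)
    (σ : Finset (Fin n))
    (Aσ : Matrix {i // i ∈ σ} {i // i ∈ σ} ℝ)
    (hAσ : ∀ i j : {i // i ∈ σ}, Aσ i j = if E (j : Fin n) (i : Fin n) then 1 else 0)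
    (β : ℝ) (hβ : β = -(ε + δ) / δ)
    (p : {i // i ∈ σ} → ℝ)
    (hp : p = ∑ k ∈ Finset.range n, β ^ k • (Aσ ^ k).mulVec (fun _ => (1 : ℝ)))
    (hden : -δ + (1 + δ) * ∑ j, p j ≠ 0)
    (Γ : ℝ) (hΓ : Γ = θ / (-δ + (1 + δ) * ∑ j, p j))
    (x : Fin n → ℝ)
    (hx : ∀ j : Fin n, x j = if h : j ∈ σ then p ⟨j, h⟩ * Γ else 0) :
    ∀ i ∈ σ, -x i + (∑ j, W i j * x j) + θ = 0 := by
  intro i hi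
  have hE : ∀ a, ¬ E a a := fun a h => hacyc a (.single h)
  have hnil : Aσ ^ n = 0 := by
    refine pow_eq_zero_of_le (by simpa using σ.card_le_univ)
      (pow_card_eq_zero_of_acyclic (r := fun a b : σ => E a b)
        (fun a h => hacyc a (h.lift Subtype.val fun _ _ => id))
        fun a b h => by_contra fun hba => h (by simp [hAσ, hba]))
  have hfix : p = 1 + (β • Aσ) *ᵥ p := by
    have hp' : p = (∑ k ∈ range n, (β • Aσ) ^ k) *ᵥ 1 := by
      simp only [hp, smul_pow, sum_mulVec, smul_mulVec]; rfl
    rw [hp']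
    exact mulVec_geom_sum_eq_add (by rw [smul_pow, hnil, smul_zero]) 1
  have hfix_i : p ⟨i, hi⟩ = 1 + β * (Aσ *ᵥ p) ⟨i, hi⟩ := by
    simpa [smul_mulVec] using congrFun hfix ⟨i, hi⟩
  have hxi : x i = p ⟨i, hi⟩ * Γ := by simp [hx, hi]
  have hrow : ∑ j, W i j * x j = ((1 + δ) * p ⟨i, hi⟩ - (1 + δ) * ∑ j, p j
      + (ε + δ) * (Aσ *ᵥ p) ⟨i, hi⟩) * Γ := by
    simp only [hx]
    rw [sum_mul_dite_mem σ (W i) (fun j => p j * Γ), ← ctln_sum_weight_mul hE hW hAσ p ⟨i, hi⟩,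
      sum_mul]
    simp only [mul_assoc]
  have hβδ : β * δ = -(ε + δ) := by rw [hβ, div_mul_cancel₀ _ hδ.ne']
  have hθ : Γ * (-δ + (1 + δ) * ∑ j, p j) = θ := by rw [hΓ, div_mul_cancel₀ θ hden]
  rw [hrow, hxi]
  linear_combination Γ * δ * hfix_i + Γ * (Aσ *ᵥ p) ⟨i, hi⟩ * hβδ - hθ

/-- The fixed point of the linear system `L_σ` of a DAG CTLN, expressed via the
localized path polynomials of the induced subgraph `G|_σ` evaluated at `β = −(ε+δ)/δ`. -/
theorem stmt_11 (n : ℕ) (E : Fin n → Fin n → Prop) [DecidableRel E]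
    (hacyc : ∀ i, ¬ Relation.TransGen E i i)
    (δ ε θ : ℝ) (hδ : 0 < δ) (hε : 0 < ε) (hεδ : ε < δ / (1 + δ)) (hθ : 0 < θ)
    (W : Matrix (Fin n) (Fin n) ℝ)
    (hW : ∀ i j, W i j = if i = j then 0 else if E j i then -1 + ε else -1 - δ)
    (σ : Finset (Fin n)) (hσ : σ.Nonempty)
    (Aσ : Matrix {i // i ∈ σ} {i // i ∈ σ} ℝ)
    (hAσ : ∀ i j : {i // i ∈ σ}, Aσ i j = if E (j : Fin n) (i : Fin n) then 1 else 0)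
    (β : ℝ) (hβ : β = -(ε + δ) / δ)
    (p : {i // i ∈ σ} → ℝ)
    (hp : p = ∑ k ∈ Finset.range n, β ^ k • (Aσ ^ k).mulVec (fun _ => (1 : ℝ)))
    (hden : -δ + (1 + δ) * ∑ j, p j ≠ 0)
    (Γ : ℝ) (hΓ : Γ = θ / (-δ + (1 + δ) * ∑ j, p j))
    (x : Fin n → ℝ)
    (hx : ∀ j : Fin n, x j = if h : j ∈ σ then p ⟨j, h⟩ * Γ else 0) :
    ∀ i ∈ σ, -x i + (∑ j, W i j * x j) + θ = 0 :=
  stmt_11_general n E hacyc δ ε θ hδ W hW σ Aσ hAσ β hβ p hp hden Γ hΓ x hx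
end

section
/- Let G be a directed acyclic graph on {1,…,n}, n ≥ 2, whose sinks are exactly the vertices 1 and 2, with CTLN weight matrix W (parameters δ > 0, 0 < ε < δ/(1+δ), θ > 0). Let M be the n×n matrix with M_{11} = M_{22} = −1, M_{12} = M_{21} = −1−δ, M_{1k} = W_{1k} and M_{2k} = W_{2k} for k ≥ 3, M_{kk} = −1 for k ≥ 3, and all other entries 0. Then: (a) M(e_1 − e_2) = δ·(e_1 − e_2); (b) M(e_1 + e_2) = (−2−δ)·(e_1 + e_2); (c) for each k ∈ {3,…,n}, the vector v_k = (−W_{2k}/(1+δ))·e_1 + (−W_{1k}/(1+δ))·e_2 − e_k satisfies M·v_k = −v_k; (d) the vector n⃗ = −e_1 + e_2 + Σ_{k=3}^n a_k·e_k, where a_k = 0 if (k→1 and k→2 in G) or (k↛1 and k↛2), a_k = −(ε+δ)/(1+δ) if k→1 and k↛2, and a_k = (ε+δ)/(1+δ) if k↛1 and k→2, is orthogonal to e_1+e_2 and to every v_k, and satisfies n⃗·x* = 0 for the saddle point x* = (θ/(2+δ))·(e_1 + e_2). Hence the span of the n−1 eigenvectors of M with negative eigenvalue is the hyperplane {x :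 −x_1 + x_2 + Σ_{k≥3} a_k x_k = 0} through x*. -/
open Matrix

/-- Spectral decomposition of the linear system `L_{{1,2}}` of a CTLN on a DAG whose
sinks are exactly vertices 1 and 2 (indices `i0`, `i1`), and identification of the span
of the eigenvectors with negative eigenvalue with the hyperplane
`−x₁ + x₂ + Σ_{k≥3} a_k x_k = 0` through the saddle point. -/
theorem stmt_13 (n : ℕ) (hn : 2 ≤ n)
    (E : Fin n → Fin n → Prop) [DecidableRel E]
    (hacyc : ∀ i, ¬ Relation.TransGen E i i)
    (δ ε θ : ℝ) (hδ : 0 < δ) (hε : 0 < ε) (hεδ : ε < δ / (1 + δ)) (hθ : 0 < θ)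
    (W : Matrix (Fin n) (Fin n) ℝ)
    (hW : ∀ i j, W i j = if i = j then 0 else if E j i then -1 + ε else -1 - δ)
    (i0 i1 : Fin n) (hi0 : (i0 : ℕ) = 0) (hi1 : (i1 : ℕ) = 1)
    (hs0 : ∀ k, ¬ E i0 k) (hs1 : ∀ k, ¬ E i1 k)
    (honly : ∀ i, (∀ k, ¬ E i k) → i = i0 ∨ i = i1)
    (M : Matrix (Fin n) (Fin n) ℝ)
    (hM00 : M i0 i0 = -1) (hM11 : M i1 i1 = -1)
    (hM01 : M i0 i1 = -1 - δ) (hM10 : M i1 i0 = -1 - δ)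
    (hM0k : ∀ k : Fin n, 2 ≤ (k : ℕ) → M i0 k = W i0 k)
    (hM1k : ∀ k : Fin n, 2 ≤ (k : ℕ) → M i1 k = W i1 k)
    (hMkk : ∀ k : Fin n, 2 ≤ (k : ℕ) → M k k = -1)
    (hMz : ∀ k j : Fin n, 2 ≤ (k : ℕ) → j ≠ k → M k j = 0)
    (v : Fin n → (Fin n → ℝ))
    (hv : ∀ k : Fin n, 2 ≤ (k : ℕ) →
      v k = (-(W i1 k) / (1 + δ)) • (Pi.single i0 1 : Fin n → ℝ)
        + (-(W i0 k) / (1 + δ)) • (Pi.single i1 1 : Fin n → ℝ) - (Pi.single k 1 : Fin n → ℝ))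
    (a : Fin n → ℝ)
    (ha0 : ∀ k : Fin n, 2 ≤ (k : ℕ) →
      ((E k i0 ∧ E k i1) ∨ (¬ E k i0 ∧ ¬ E k i1)) → a k = 0)
    (ha1 : ∀ k : Fin n, 2 ≤ (k : ℕ) → E k i0 → ¬ E k i1 → a k = -(ε + δ) / (1 + δ))
    (ha2 : ∀ k : Fin n, 2 ≤ (k : ℕ) → ¬ E k i0 → E k i1 → a k = (ε + δ) / (1 + δ))
    (nvec : Fin n → ℝ)
    (hnvec : nvec = -(Pi.single i0 1 : Fin n → ℝ) + (Pi.single i1 1 : Fin n → ℝ)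
      + ∑ k ∈ Finset.univ.filter (fun k : Fin n => 2 ≤ (k : ℕ)),
          a k • (Pi.single k 1 : Fin n → ℝ))
    (xstar : Fin n → ℝ)
    (hxstar : xstar = (θ / (2 + δ)) • ((Pi.single i0 1 : Fin n → ℝ) + (Pi.single i1 1 : Fin n → ℝ))) :
    M.mulVec ((Pi.single i0 1 : Fin n → ℝ) - (Pi.single i1 1 : Fin n → ℝ)) =
        δ • ((Pi.single i0 1 : Fin n → ℝ) - (Pi.single i1 1 : Fin n → ℝ)) ∧
    M.mulVec ((Pi.single i0 1 : Fin n → ℝ) + (Pi.single i1 1 : Fin n → ℝ)) =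
        (-2 - δ) • ((Pi.single i0 1 : Fin n → ℝ) + (Pi.single i1 1 : Fin n → ℝ)) ∧
    (∀ k : Fin n, 2 ≤ (k : ℕ) → M.mulVec (v k) = -(v k)) ∧
    nvec ⬝ᵥ ((Pi.single i0 1 : Fin n → ℝ) + (Pi.single i1 1 : Fin n → ℝ)) = 0 ∧
    (∀ k : Fin n, 2 ≤ (k : ℕ) → nvec ⬝ᵥ v k = 0) ∧
    nvec ⬝ᵥ xstar = 0 ∧
    (Submodule.span ℝ ({(Pi.single i0 1 : Fin n → ℝ) + (Pi.single i1 1 : Fin n → ℝ)} ∪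
        {w : Fin n → ℝ | ∃ k : Fin n, 2 ≤ (k : ℕ) ∧ w = v k}) : Set (Fin n → ℝ)) =
      {x : Fin n → ℝ | -x i0 + x i1 +
        ∑ k ∈ Finset.univ.filter (fun k : Fin n => 2 ≤ (k : ℕ)), a k * x k = 0} := by
  have h1δ : (1:ℝ) + δ ≠ 0 := by nlinarith
  have hne : i0 ≠ i1 := fun h => by rw [h, hi1] at hi0; exact one_ne_zero hi0
  have hk0 : ∀ k : Fin n, 2 ≤ (k:ℕ) → k ≠ i0 := fun k hk h => by rw [h, hi0] at hk; omega
  have hk1 : ∀ k : Fin n, 2 ≤ (k:ℕ) → k ≠ i1 := fun k hk h => by rw [h, hi1] at hk; omega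
  have htri : ∀ j : Fin n, j = i0 ∨ j = i1 ∨ 2 ≤ (j:ℕ) := by
    intro j
    rcases Nat.lt_or_ge (j:ℕ) 2 with h | h
    · interval_cases hj : (j:ℕ)
      · exact Or.inl (Fin.ext (by omega))
      · exact Or.inr (Or.inl (Fin.ext (by omega)))
    · exact Or.inr (Or.inr h)
  have mvs : ∀ i : Fin n, M.mulVec (Pi.single i 1) = fun j => M j i := by
    intro i; funext j; simp [Matrix.mulVec_single]
  -- Part (a)
  have hA : M.mulVec ((Pi.single i0 1 : Fin n → ℝ) - (Pi.single i1 1 : Fin n → ℝ)) =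
      δ • ((Pi.single i0 1 : Fin n → ℝ) - (Pi.single i1 1 : Fin n → ℝ)) := by
    funext j
    rcases htri j with h | h | hj
    · subst h
      simp [Matrix.mulVec_sub, mvs, Pi.single_apply, hne, Ne.symm hne, hM00, hM01]
      all_goals ring
    · subst h
      simp [Matrix.mulVec_sub, mvs, Pi.single_apply, hne, Ne.symm hne, hM10, hM11]
      all_goals ring
    · have h0 : M j i0 = 0 := hMz j i0 hj (Ne.symm (hk0 j hj))
      have h1 : M j i1 = 0 := hMz j i1 hj (Ne.symm (hk1 j hj))
      simp [Matrix.mulVec_sub, mvs, Pi.single_apply, hk0 j hj, hk1 j hj, h0, h1]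
  -- Part (b)
  have hB : M.mulVec ((Pi.single i0 1 : Fin n → ℝ) + (Pi.single i1 1 : Fin n → ℝ)) =
      (-2 - δ) • ((Pi.single i0 1 : Fin n → ℝ) + (Pi.single i1 1 : Fin n → ℝ)) := by
    funext j
    rcases htri j with h | h | hj
    · subst h
      simp [Matrix.mulVec_add, mvs, Pi.single_apply, hne, Ne.symm hne, hM00, hM01]
      all_goals ring
    · subst h
      simp [Matrix.mulVec_add, mvs, Pi.single_apply, hne, Ne.symm hne, hM10, hM11]
      all_goals ring
    · have h0 : M j i0 = 0 := hMz j i0 hj (Ne.symm (hk0 j hj))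
      have h1 : M j i1 = 0 := hMz j i1 hj (Ne.symm (hk1 j hj))
      simp [Matrix.mulVec_add, mvs, Pi.single_apply, hk0 j hj, hk1 j hj, h0, h1]
  -- coordinates of v k
  have hvi0 : ∀ k : Fin n, 2 ≤ (k:ℕ) → v k i0 = -(W i1 k) / (1 + δ) := by
    intro k hk
    rw [hv k hk]
    simp [Pi.single_apply, hne, Ne.symm (hk0 k hk)]
  have hvi1 : ∀ k : Fin n, 2 ≤ (k:ℕ) → v k i1 = -(W i0 k) / (1 + δ) := by
    intro k hk
    rw [hv k hk]
    simp [Pi.single_apply, Ne.symm hne, Ne.symm (hk1 k hk)]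
  have hvco : ∀ k : Fin n, 2 ≤ (k:ℕ) → ∀ j : Fin n, 2 ≤ (j:ℕ) →
      v k j = if j = k then -1 else 0 := by
    intro k hk j hj
    rw [hv k hk]
    simp [Pi.single_apply, hk0 j hj, hk1 j hj]
    split_ifs <;> norm_num
  -- Part (c)
  have hC : ∀ k : Fin n, 2 ≤ (k:ℕ) → M.mulVec (v k) = -(v k) := by
    intro k hk
    funext j
    have hWk0 : M i0 k = W i0 k := hM0k k hk
    have hWk1 : M i1 k = W i1 k := hM1k k hk
    rw [hv k hk]
    rcases htri j with h | h | hj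
    · subst h
      simp [Matrix.mulVec_sub, Matrix.mulVec_add, Matrix.mulVec_smul, mvs, Pi.single_apply,
        hne, Ne.symm hne, Ne.symm (hk0 k hk), hM00, hM01, hWk0]
      field_simp
      ring
    · subst h
      simp [Matrix.mulVec_sub, Matrix.mulVec_add, Matrix.mulVec_smul, mvs, Pi.single_apply,
        hne, Ne.symm hne, Ne.symm (hk1 k hk), hM10, hM11, hWk1]
      field_simp
      ring
    · have h0 : M j i0 = 0 := hMz j i0 hj (Ne.symm (hk0 j hj))
      have h1 : M j i1 = 0 := hMz j i1 hj (Ne.symm (hk1 j hj))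
      by_cases hjk : j = k
      · subst hjk
        simp [Matrix.mulVec_sub, Matrix.mulVec_add, Matrix.mulVec_smul, mvs, Pi.single_apply,
          hk0 j hj, hk1 j hj, h0, h1, hMkk j hj]
      · have hk' : M j k = 0 := hMz j k hj (Ne.symm hjk)
        simp [Matrix.mulVec_sub, Matrix.mulVec_add, Matrix.mulVec_smul, mvs, Pi.single_apply,
          hk0 j hj, hk1 j hj, h0, h1, hk', hjk]
  -- key identity: v k i1 - v k i0 = a k
  have hak : ∀ k : Fin n, 2 ≤ (k:ℕ) → v k i1 - v k i0 = a k := by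
    intro k hk
    have hW0 : W i0 k = if E k i0 then -1 + ε else -1 - δ := by
      rw [hW]; rw [if_neg (Ne.symm (hk0 k hk))]
    have hW1 : W i1 k = if E k i1 then -1 + ε else -1 - δ := by
      rw [hW]; rw [if_neg (Ne.symm (hk1 k hk))]
    rw [hvi0 k hk, hvi1 k hk, hW0, hW1]
    by_cases h0 : E k i0 <;> by_cases h1 : E k i1
    · rw [ha0 k hk (Or.inl ⟨h0, h1⟩)]; simp [h0, h1]
    · rw [ha1 k hk h0 h1]; simp only [if_pos h0, if_neg h1]; field_simp; ring
    · rw [ha2 k hk h0 h1]; simp only [if_neg h0, if_pos h1]; field_simp; ring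
    · rw [ha0 k hk (Or.inr ⟨h0, h1⟩)]; simp [h0, h1]
  -- dot product formula for nvec
  have hsumdot : ∀ (x : Fin n → ℝ),
      (∑ k ∈ Finset.univ.filter (fun k : Fin n => 2 ≤ (k : ℕ)),
        a k • (Pi.single k 1 : Fin n → ℝ)) ⬝ᵥ x
      = ∑ k ∈ Finset.univ.filter (fun k : Fin n => 2 ≤ (k : ℕ)), a k * x k := by
    intro x
    simp only [dotProduct, Finset.sum_apply, Pi.smul_apply, smul_eq_mul, Finset.sum_mul]
    rw [Finset.sum_comm]
    refine Finset.sum_congr rfl fun k _ => ?_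
    simp [Pi.single_apply, mul_comm]
  have hdot : ∀ x : Fin n → ℝ, nvec ⬝ᵥ x = -x i0 + x i1 +
      ∑ k ∈ Finset.univ.filter (fun k : Fin n => 2 ≤ (k : ℕ)), a k * x k := by
    intro x
    rw [hnvec, add_dotProduct, add_dotProduct, neg_dotProduct,
      single_dotProduct, single_dotProduct, hsumdot]
    ring
  -- Part (d1)
  have hD1 : nvec ⬝ᵥ ((Pi.single i0 1 : Fin n → ℝ) + (Pi.single i1 1 : Fin n → ℝ)) = 0 := by
    rw [hdot]
    rw [Finset.sum_eq_zero (fun k hk => by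
      have hk2 : 2 ≤ (k:ℕ) := (Finset.mem_filter.mp hk).2
      simp [Pi.single_apply, hk0 k hk2, hk1 k hk2])]
    simp [Pi.single_apply, hne, Ne.symm hne]
  -- Part (d2)
  have hD2 : ∀ k : Fin n, 2 ≤ (k:ℕ) → nvec ⬝ᵥ v k = 0 := by
    intro k hk
    rw [hdot]
    have hkS : k ∈ Finset.univ.filter (fun k : Fin n => 2 ≤ (k : ℕ)) :=
      Finset.mem_filter.mpr ⟨Finset.mem_univ k, hk⟩
    have hsum : ∑ j ∈ Finset.univ.filter (fun k : Fin n => 2 ≤ (k : ℕ)), a j * v k j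
        = -a k := by
      rw [Finset.sum_congr rfl (fun j hj => by
        rw [hvco k hk j (Finset.mem_filter.mp hj).2])]
      simp only [mul_ite, mul_neg_one, mul_zero]
      rw [Finset.sum_ite_eq' _ k (fun j => -a j)] <;> simp [hkS]
    rw [hsum]
    have := hak k hk
    linarith
  -- Part (d3)
  have hD3 : nvec ⬝ᵥ xstar = 0 := by
    rw [hxstar, dotProduct_smul, hD1, smul_zero]
  refine ⟨hA, hB, hC, hD1, hD2, hD3, ?_⟩
  -- Part (e): span = hyperplane
  ext x
  simp only [SetLike.mem_coe, Set.mem_setOf_eq]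
  constructor
  · intro hx
    have : nvec ⬝ᵥ x = 0 := by
      induction hx using Submodule.span_induction with
      | mem y hy =>
        rcases hy with hy | ⟨k, hk, rfl⟩
        · rw [Set.mem_singleton_iff.mp hy]; exact hD1
        · exact hD2 k hk
      | zero => exact dotProduct_zero nvec
      | add y z _ _ hy hz => rw [dotProduct_add, hy, hz, add_zero]
      | smul c y _ hy => rw [dotProduct_smul, hy, smul_zero]
    rw [hdot] at this
    exact this
  · intro hx
    have he01 : (Pi.single i0 1 : Fin n → ℝ) + (Pi.single i1 1 : Fin n → ℝ) ∈
        Submodule.span ℝ ({(Pi.single i0 1 : Fin n → ℝ) + (Pi.single i1 1 : Fin n → ℝ)} ∪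
          {w : Fin n → ℝ | ∃ k : Fin n, 2 ≤ (k : ℕ) ∧ w = v k}) :=
      Submodule.subset_span (Or.inl rfl)
    have hvk : ∀ k : Fin n, 2 ≤ (k:ℕ) → v k ∈
        Submodule.span ℝ ({(Pi.single i0 1 : Fin n → ℝ) + (Pi.single i1 1 : Fin n → ℝ)} ∪
          {w : Fin n → ℝ | ∃ k : Fin n, 2 ≤ (k : ℕ) ∧ w = v k}) :=
      fun k hk => Submodule.subset_span (Or.inr ⟨k, hk, rfl⟩)
    set S := Finset.univ.filter (fun k : Fin n => 2 ≤ (k : ℕ)) with hS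
    set c : ℝ := x i0 + ∑ k ∈ S, x k * v k i0 with hc
    have hxeq : x = c • ((Pi.single i0 1 : Fin n → ℝ) + (Pi.single i1 1 : Fin n → ℝ))
        - ∑ k ∈ S, x k • v k := by
      funext j
      have hsj : (∑ k ∈ S, x k • v k) j = ∑ k ∈ S, x k * v k j := by
        simp [Finset.sum_apply]
      rcases htri j with h | h | hj
      · rw [h] at hsj ⊢
        simp [hsj, hc, Pi.single_apply, hne, Ne.symm hne]
        all_goals ring
      · rw [h] at hsj ⊢
        have hsum1 : ∑ k ∈ S, x k * v k i1 - ∑ k ∈ S, x k * v k i0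
            = ∑ k ∈ S, a k * x k := by
          rw [← Finset.sum_sub_distrib]
          refine Finset.sum_congr rfl fun k hk => ?_
          have := hak k (Finset.mem_filter.mp hk).2
          rw [← this]; ring
        have hx' : ∑ k ∈ S, a k * x k = x i0 - x i1 := by linarith [hx]
        simp [hsj, hc, Pi.single_apply, hne, Ne.symm hne]
        rw [hx'] at hsum1
        linarith
      · have hjS : j ∈ S := Finset.mem_filter.mpr ⟨Finset.mem_univ j, hj⟩
        have hsum2 : ∑ k ∈ S, x k * v k j = -x j := by
          rw [Finset.sum_congr rfl (fun k hk => by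
            rw [hvco k (Finset.mem_filter.mp hk).2 j hj])]
          simp only [mul_ite, mul_neg_one, mul_zero]
          rw [Finset.sum_ite_eq S j (fun k => -x k)]
          simp [hjS]
        simp [hsj, hsum2, hc, Pi.single_apply, hk0 j hj, hk1 j hj]
        all_goals ring
    rw [hxeq]
    exact Submodule.sub_mem _ (Submodule.smul_mem _ c he01)
      (Submodule.sum_mem _ fun k hk =>
        Submodule.smul_mem _ _ (hvk k (Finset.mem_filter.mp hk).2))
end

section
/- Let G be a directed graph on {1,…,n} with no self-loops, with CTLN weight matrix W (parameters δ > 0, 0 < ε < δ/(1+δ), θ > 0), and let σ ⊆ {1,…,n} with |σ| ≥ 2 be an independent set of G (no edges in either direction between vertices of σ). Let B be the n×n matrix with B_{ij} = (−I + W)_{ij} for i ∈ σ and all j, B_{kk} = −1 for k ∉ σ, and B_{kj} = 0 for k ∉ σ, j ≠ k. Set γ = (ε+δ)/(1+δ), 𝟙_σ = Σ_{k∈σ} e_k, and for j ∉ σ let id_j(σ) = #{k ∈ σ : j→k} and 𝟙_{σ←j} = Σ_{k∈σ, j→k} e_k. Then: (a) the vector x* = (θ/(|σ| + (|σ|−1)δ))·𝟙_σ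 satisfies B·x* = −θ·𝟙_σ; (b) for all distinct i, j ∈ σ, B(e_i − e_j) = δ·(e_i − e_j); (c) B·𝟙_σ = (δ − (1+δ)|σ|)·𝟙_σ; (d) for each j ∉ σ, the vector v_j = ((1/(|σ|−1)) − γ·id_j(σ)/(|σ|−1))·𝟙_σ + γ·𝟙_{σ←j} − e_j satisfies B·v_j = −v_j. -/
open Matrix

/-- Fixed point and full eigenvector decomposition of the linear system `L_σ` of a CTLN
when the induced subgraph `G|_σ` is an independent set with `|σ| ≥ 2`. -/
theorem stmt_14 (n : ℕ) (E : Fin n → Fin n → Prop) [DecidableRel E]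
    (hloop : ∀ i, ¬ E i i)
    (δ ε θ : ℝ) (hδ : 0 < δ) (hε : 0 < ε) (hεδ : ε < δ / (1 + δ)) (hθ : 0 < θ)
    (W : Matrix (Fin n) (Fin n) ℝ)
    (hW : ∀ i j, W i j = if i = j then 0 else if E j i then -1 + ε else -1 - δ)
    (σ : Finset (Fin n)) (hcard : 2 ≤ σ.card)
    (hind : ∀ i ∈ σ, ∀ j ∈ σ, ¬ E i j)
    (B : Matrix (Fin n) (Fin n) ℝ)
    (hB1 : ∀ i ∈ σ, ∀ j, B i j = (-1 + W) i j)
    (hB2 : ∀ k ∉ σ, B k k = -1)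
    (hB3 : ∀ k ∉ σ, ∀ j, j ≠ k → B k j = 0)
    (γ : ℝ) (hγ : γ = (ε + δ) / (1 + δ))
    (oneσ : Fin n → ℝ) (honeσ : ∀ i, oneσ i = if i ∈ σ then 1 else 0) :
    B.mulVec ((θ / ((σ.card : ℝ) + ((σ.card : ℝ) - 1) * δ)) • oneσ) = (-θ) • oneσ ∧
    (∀ i ∈ σ, ∀ j ∈ σ, i ≠ j →
      B.mulVec ((Pi.single i 1 : Fin n → ℝ) - (Pi.single j 1 : Fin n → ℝ)) =
        δ • ((Pi.single i 1 : Fin n → ℝ) - (Pi.single j 1 : Fin n → ℝ))) ∧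
    B.mulVec oneσ = (δ - (1 + δ) * (σ.card : ℝ)) • oneσ ∧
    (∀ j ∉ σ,
      B.mulVec
        ((1 / ((σ.card : ℝ) - 1)
            - γ * ((σ.filter (fun k => E j k)).card : ℝ) / ((σ.card : ℝ) - 1)) • oneσ
          + γ • (fun i => if i ∈ σ ∧ E j i then (1 : ℝ) else 0)
          - (Pi.single j 1 : Fin n → ℝ))
      = -((1 / ((σ.card : ℝ) - 1)
            - γ * ((σ.filter (fun k => E j k)).card : ℝ) / ((σ.card : ℝ) - 1)) • oneσ
          + γ • (fun i => if i ∈ σ ∧ E j i then (1 : ℝ) else 0)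
          - (Pi.single j 1 : Fin n → ℝ))) := by
  have h1δ : (1 : ℝ) + δ ≠ 0 := by positivity
  have hm2 : (2 : ℝ) ≤ (σ.card : ℝ) := by exact_mod_cast hcard
  have hm1 : ((σ.card : ℝ) - 1) ≠ 0 := by linarith
  -- entries of B
  have hBii : ∀ i ∈ σ, B i i = -1 := by
    intro i hi
    rw [hB1 i hi i]
    simp [Matrix.add_apply, Matrix.neg_apply, Matrix.one_apply, hW]
  have hBij : ∀ i ∈ σ, ∀ j, i ≠ j → B i j = if E j i then -1 + ε else -1 - δ := by
    intro i hi j hij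
    rw [hB1 i hi j]
    simp [Matrix.add_apply, Matrix.neg_apply, Matrix.one_apply, hW, hij]
  have hBijσ : ∀ i ∈ σ, ∀ j ∈ σ, i ≠ j → B i j = -1 - δ := by
    intro i hi j hj hij
    rw [hBij i hi j hij, if_neg (hind j hj i hi)]
  -- rows outside σ
  have rowout : ∀ i ∉ σ, ∀ v : Fin n → ℝ, B.mulVec v i = -(v i) := by
    intro i hi v
    simp only [Matrix.mulVec, dotProduct]
    rw [Finset.sum_eq_single i]
    · rw [hB2 i hi]; ring
    · intro b _ hb; rw [hB3 i hi b hb, zero_mul]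
    · intro h; exact absurd (Finset.mem_univ i) h
  -- rows inside σ
  have rowin : ∀ i ∈ σ, ∀ v : Fin n → ℝ,
      B.mulVec v i = (-1 - δ) * (∑ j' ∈ σ, v j') + δ * v i + ∑ j' ∈ σᶜ, B i j' * v j' := by
    intro i hi v
    simp only [Matrix.mulVec, dotProduct]
    rw [← Finset.sum_add_sum_compl σ (fun j' => B i j' * v j')]
    congr 1
    have h : ∀ j' ∈ σ, B i j' * v j' = (-1 - δ) * v j' + (if i = j' then δ * v j' else 0) := by
      intro j' hj'
      by_cases hji : i = j'
      · subst hji; rw [hBii i hi, if_pos rfl]; ring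
      · rw [hBijσ i hi j' hj' hji, if_neg hji, add_zero]
    rw [Finset.sum_congr rfl h, Finset.sum_add_distrib, Finset.sum_ite_eq σ i, if_pos hi,
      ← Finset.mul_sum]
  have hsumone : (∑ j' ∈ σ, oneσ j') = (σ.card : ℝ) := by
    rw [Finset.sum_congr rfl (fun j hj => by rw [honeσ, if_pos hj])]
    simp
  -- part (c)
  have partC : B.mulVec oneσ = (δ - (1 + δ) * (σ.card : ℝ)) • oneσ := by
    funext i
    by_cases hi : i ∈ σ
    · rw [rowin i hi]
      have hout : (∑ j' ∈ σᶜ, B i j' * oneσ j') = 0 :=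
        Finset.sum_eq_zero (fun j hj => by
          rw [honeσ, if_neg (Finset.mem_compl.mp hj), mul_zero])
      rw [hsumone, hout, honeσ i, if_pos hi, Pi.smul_apply, honeσ i, if_pos hi,
        smul_eq_mul]
      ring
    · rw [rowout i hi, Pi.smul_apply, honeσ i, if_neg hi, smul_eq_mul]
      ring
  refine ⟨?_, ?_, partC, ?_⟩
  · -- part (a)
    have hD : (σ.card : ℝ) + ((σ.card : ℝ) - 1) * δ ≠ 0 := by nlinarith
    rw [Matrix.mulVec_smul, partC, smul_smul]
    congr 1
    field_simp
    ring
  · -- part (b)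
    intro i hi j hj hij
    set w : Fin n → ℝ := (Pi.single i 1 : Fin n → ℝ) - (Pi.single j 1 : Fin n → ℝ) with hw
    have hwap : ∀ r, w r = (if r = i then 1 else 0) - (if r = j then 1 else 0) := by
      intro r
      simp [hw, Pi.single_apply]
    funext r
    by_cases hr : r ∈ σ
    · rw [rowin r hr]
      have hsum : (∑ j' ∈ σ, w j') = 0 := by
        rw [Finset.sum_congr rfl (fun j' _ => hwap j'), Finset.sum_sub_distrib,
          Finset.sum_ite_eq' σ i, Finset.sum_ite_eq' σ j, if_pos hi, if_pos hj]
        ring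
      have hout : (∑ j' ∈ σᶜ, B r j' * w j') = 0 :=
        Finset.sum_eq_zero (fun k hk => by
          have hk' := Finset.mem_compl.mp hk
          have h1 : k ≠ i := fun h => hk' (h ▸ hi)
          have h2 : k ≠ j := fun h => hk' (h ▸ hj)
          rw [hwap k, if_neg h1, if_neg h2]
          ring)
      rw [hsum, hout, Pi.smul_apply, smul_eq_mul]
      ring
    · have h1 : r ≠ i := fun h => hr (h ▸ hi)
      have h2 : r ≠ j := fun h => hr (h ▸ hj)
      rw [rowout r hr, Pi.smul_apply, smul_eq_mul, hwap r, if_neg h1, if_neg h2]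
      ring
  · -- part (d)
    intro j hj
    set d : ℝ := ((σ.filter (fun k => E j k)).card : ℝ) with hd
    set a : ℝ := 1 / ((σ.card : ℝ) - 1) - γ * d / ((σ.card : ℝ) - 1) with ha
    set u : Fin n → ℝ := fun i => if i ∈ σ ∧ E j i then (1 : ℝ) else 0 with hu
    set v : Fin n → ℝ := a • oneσ + γ • u - (Pi.single j 1 : Fin n → ℝ) with hv
    have hvin : ∀ i ∈ σ, v i = a + γ * (if E j i then (1:ℝ) else 0) := by
      intro i hi
      have hij : i ≠ j := fun h => hj (h ▸ hi)
      simp only [hv, Pi.sub_apply, Pi.add_apply, Pi.smul_apply, smul_eq_mul,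
        Pi.single_apply, if_neg hij, honeσ, if_pos hi, hu]
      by_cases hE : E j i <;> simp [hE, hi] <;> ring
    have hvout : ∀ i ∉ σ, v i = -(if i = j then (1:ℝ) else 0) := by
      intro i hi
      simp only [hv, Pi.sub_apply, Pi.add_apply, Pi.smul_apply, smul_eq_mul,
        Pi.single_apply, honeσ, if_neg hi, hu]
      have h2 : ¬ (i ∈ σ ∧ E j i) := fun h => hi h.1
      simp [h2]
    have hsumv : (∑ j' ∈ σ, v j') = (σ.card : ℝ) * a + γ * d := by
      rw [Finset.sum_congr rfl hvin, Finset.sum_add_distrib, ← Finset.mul_sum,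
        Finset.sum_const, nsmul_eq_mul, Finset.sum_boole, hd]
    funext i
    by_cases hi : i ∈ σ
    · rw [rowin i hi, hsumv]
      have hout : (∑ j' ∈ σᶜ, B i j' * v j') = -(B i j) := by
        rw [Finset.sum_eq_single_of_mem j (Finset.mem_compl.mpr hj)]
        · rw [hvout j hj, if_pos rfl]; ring
        · intro b hb hbj
          rw [hvout b (Finset.mem_compl.mp hb), if_neg hbj]
          ring
      have hij : i ≠ j := fun h => hj (h ▸ hi)
      rw [hout, hBij i hi j hij, Pi.neg_apply, hvin i hi, ha, hγ]
      by_cases hE : E j i <;>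
        simp only [hE, ite_true, ite_false, if_pos, if_neg] <;>
        field_simp <;> ring
    · rw [rowout i hi, Pi.neg_apply]
end

section
/- Let A be an n×n real matrix with A^{m+1} = 0, let c ∈ ℝ, a ∈ ℝ with a ≠ 0, φ ∈ ℝ^n, and B = 𝟙𝟙ᵀ + c·A. Set κ = c/a, p = Σ_{k=0}^{m} κ^k·A^k·𝟙 and q = Σ_{k=0}^{m} κ^k·(Aᵀ)^k·𝟙, and suppose −a + Σ_{j=1}^n p_j ≠ 0. Set Φ = (1/a)·φ and Γ = (Σ_{i=1}^n Φ_i·q_i)/(−a + Σ_{j=1}^n p_j). Then the vector x = −Σ_{k=0}^{m} κ^k·A^k·Φ + Γ·p, i.e. x_j = −Σ_{i=1}^n Φ_i·(Σ_{k=0}^{m} κ^k·(A^k)_{ji}) + p_j·Γ, satisfies B·x = φ + a·x. -/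
open Matrix

private lemma sum_mulVec' {n : ℕ} (s : Finset ℕ) (f : ℕ → Matrix (Fin n) (Fin n) ℝ)
    (v : Fin n → ℝ) : (∑ k ∈ s, f k) *ᵥ v = ∑ k ∈ s, (f k) *ᵥ v := by
  ext i
  simp only [Matrix.mulVec, dotProduct, Finset.sum_apply, Matrix.sum_apply,
    Finset.sum_mul]
  rw [Finset.sum_comm]

/-- Generalized DAG Lemma for heterogeneous input: the system `B·x = φ + a·x`,
`B = 𝟙𝟙ᵀ + c·A` with `A` nilpotent, is solved by
`x = −Σ_k κ^k A^k Φ + Γ·p` with `κ = c/a`, `Φ = φ/a`,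
`p = Σ_k κ^k A^k 𝟙`, `q = Σ_k κ^k (Aᵀ)^k 𝟙` and `Γ = (Σ_i Φ_i q_i)/(−a + Σ_j p_j)`. -/
theorem stmt_18 (n m : ℕ) (A : Matrix (Fin n) (Fin n) ℝ) (hnil : A ^ (m + 1) = 0)
    (c a : ℝ) (ha : a ≠ 0) (φ : Fin n → ℝ)
    (B : Matrix (Fin n) (Fin n) ℝ)
    (hB : B = Matrix.of (fun _ _ => (1 : ℝ)) + c • A)
    (κ : ℝ) (hκ : κ = c / a)
    (p q : Fin n → ℝ)
    (hp : p = ∑ k ∈ Finset.range (m + 1), κ ^ k • (A ^ k).mulVec (fun _ => (1 : ℝ)))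
    (hq : q = ∑ k ∈ Finset.range (m + 1), κ ^ k • ((Aᵀ) ^ k).mulVec (fun _ => (1 : ℝ)))
    (hsum : -a + ∑ j, p j ≠ 0)
    (Φ : Fin n → ℝ) (hΦ : Φ = a⁻¹ • φ)
    (Γ : ℝ) (hΓ : Γ = (∑ i, Φ i * q i) / (-a + ∑ j, p j))
    (x : Fin n → ℝ)
    (hx : x = -(∑ k ∈ Finset.range (m + 1), κ ^ k • (A ^ k).mulVec Φ) + Γ • p) :
    B.mulVec x = φ + a • x := by
  have hca : c = a * κ := by rw [hκ]; field_simp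
  set S : Matrix (Fin n) (Fin n) ℝ := ∑ k ∈ Finset.range (m + 1), (κ • A) ^ k with hS
  have hSmul : ∀ v : Fin n → ℝ,
      S *ᵥ v = ∑ k ∈ Finset.range (m + 1), κ ^ k • (A ^ k) *ᵥ v := by
    intro v
    rw [hS, sum_mulVec']
    refine Finset.sum_congr rfl fun k _ => ?_
    rw [smul_pow, smul_mulVec]
  have hp' : p = S *ᵥ (fun _ => (1 : ℝ)) := by rw [hp, hSmul]
  have hx' : x = -(S *ᵥ Φ) + Γ • p := by rw [hx, hSmul]
  have hq' : q = Sᵀ *ᵥ (fun _ => (1 : ℝ)) := by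
    rw [hq, hS, Matrix.transpose_sum, sum_mulVec']
    refine Finset.sum_congr rfl fun k _ => ?_
    rw [smul_pow, Matrix.transpose_smul, Matrix.transpose_pow, smul_mulVec]
  -- the inverse identity
  have hinv : (1 - κ • A) * S = 1 := by
    have h1 : (κ • A) ^ (m + 1) = 0 := by rw [smul_pow, hnil, smul_zero]
    have h2 := mul_geom_sum (κ • A) (m + 1)
    rw [h1, zero_sub] at h2
    calc (1 - κ • A) * S = -((κ • A - 1) * S) := by rw [← neg_mul, neg_sub]
      _ = 1 := by rw [h2, neg_neg]
  -- key vector identity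
  have hkey : x - κ • (A *ᵥ x) = -Φ + Γ • (fun _ => (1 : ℝ)) := by
    have hSv : ∀ v : Fin n → ℝ, (1 - κ • A) *ᵥ (S *ᵥ v) = v := by
      intro v; rw [mulVec_mulVec, hinv, one_mulVec]
    have : (1 - κ • A) *ᵥ x = -Φ + Γ • (fun _ => (1 : ℝ)) := by
      rw [hx', hp', Matrix.mulVec_add, Matrix.mulVec_neg, hSv, mulVec_smul, hSv]
    rw [← this, Matrix.sub_mulVec, Matrix.one_mulVec, smul_mulVec]
  -- column sums of S relate to q
  have hΦq : ∑ i, (S *ᵥ Φ) i = ∑ i, Φ i * q i := by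
    simp only [hq', Matrix.mulVec, dotProduct, Matrix.transpose_apply]
    rw [Finset.sum_comm]
    simp [mul_comm, Finset.sum_mul, Finset.mul_sum]
  -- total sum of x
  have hΓ' : Γ * (-a + ∑ j, p j) = ∑ i, Φ i * q i := by
    rw [hΓ, div_mul_cancel₀ _ hsum]
  have hsx : ∑ i, x i = a * Γ := by
    have : ∑ i, x i = -(∑ i, (S *ᵥ Φ) i) + Γ * ∑ j, p j := by
      simp [hx', Finset.sum_add_distrib, Finset.mul_sum]
    rw [this, hΦq, ← hΓ']
    ring
  -- finish pointwise
  rw [hB]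
  funext j
  have hAx := congrFun hkey j
  simp only [Pi.sub_apply, Pi.smul_apply, Pi.add_apply, Pi.neg_apply, smul_eq_mul] at hAx
  have hBx : ((Matrix.of (fun _ _ => (1 : ℝ)) + c • A) *ᵥ x) j
      = (∑ i, x i) + c * (A *ᵥ x) j := by
    simp [Matrix.add_mulVec, smul_mulVec, Matrix.mulVec, dotProduct,
      add_mul, Finset.sum_add_distrib, Finset.mul_sum, mul_assoc]
  have hφ : φ j = a * Φ j := by rw [hΦ]; simp [ha]
  rw [hBx, hsx, hca]
  simp only [Pi.add_apply, Pi.smul_apply, smul_eq_mul]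
  rw [hφ]
  linear_combination (-a) * hAx
end

section
/- Let G be a directed acyclic graph on {1,…,n} with adjacency matrix A (A_{ij} = 1 iff j→i) and maximum path length m, and let W be the weight matrix with W_{ii} = 0, W_{ij} = −1+ε if j→i, and W_{ij} = −1−δ otherwise (i≠j), where δ > 0 and 0 < ε < δ/(1+δ). Let θ⃗ ∈ ℝ^n be an arbitrary external input vector and set β = −(ε+δ)/(1+δ). Define p_j^G(β) = Σ_{k=0}^{m} β^k·(A^k𝟙)_j, p_{j,i}^G(β) = Σ_{k=0}^{m} β^k·(A^k)_{ji}, and p_i^{Gᵀ}(β) = Σ_{k=0}^{m} β^k·((Aᵀ)^k𝟙)_i, and suppose −1 + Σ_{i=1}^n p_i^G(β) ≠ 0. Then the vector x with x_j = −Σ_{i=1}^n (θ_i/(1+δ))·p_{j,i}^G(β) + p_j^G(β)·Γ, where Γ = (Σ_{i=1}^n θ_i·p_i^{Gᵀ}(β))/((1+δ)·(−1 + Σ_{i=1}^n p_i^G(β))), satisfies W·x = −θ⃗; i.e., x is the balanced state of the heterogeneous CTLN. -/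
open Matrix

/-- The balanced state of a heterogeneous CTLN on a DAG, expressed via localized and
pinned path polynomials evaluated at `β = −(ε+δ)/(1+δ)`. -/
theorem stmt_19 (n : ℕ) (E : Fin n → Fin n → Prop) [DecidableRel E]
    (hacyc : ∀ i, ¬ Relation.TransGen E i i)
    (A : Matrix (Fin n) (Fin n) ℝ)
    (hA : ∀ i j, A i j = if E j i then 1 else 0)
    (m : ℕ) (hnil : A ^ (m + 1) = 0)
    (δ ε : ℝ) (hδ : 0 < δ) (hε : 0 < ε) (hεδ : ε < δ / (1 + δ))
    (W : Matrix (Fin n) (Fin n) ℝ)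
    (hW : ∀ i j, W i j = if i = j then 0 else if E j i then -1 + ε else -1 - δ)
    (θ : Fin n → ℝ)
    (β : ℝ) (hβ : β = -(ε + δ) / (1 + δ))
    (p : Fin n → ℝ)
    (hp : ∀ j, p j = ∑ k ∈ Finset.range (m + 1),
      β ^ k * ((A ^ k).mulVec (fun _ => (1 : ℝ))) j)
    (q : Fin n → ℝ)
    (hq : ∀ i, q i = ∑ k ∈ Finset.range (m + 1),
      β ^ k * (((Aᵀ) ^ k).mulVec (fun _ => (1 : ℝ))) i)
    (hsum : -1 + ∑ i, p i ≠ 0)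
    (Γ : ℝ) (hΓ : Γ = (∑ i, θ i * q i) / ((1 + δ) * (-1 + ∑ i, p i)))
    (x : Fin n → ℝ)
    (hx : ∀ j, x j = -(∑ i, (θ i / (1 + δ)) *
        (∑ k ∈ Finset.range (m + 1), β ^ k * (A ^ k) j i)) + p j * Γ) :
    W.mulVec x = -θ := by
  have hone : (0:ℝ) < 1 + δ := by linarith
  have hone' : (1:ℝ) + δ ≠ 0 := ne_of_gt hone
  set B : Matrix (Fin n) (Fin n) ℝ := β • A with hB
  have hBk : ∀ k, B ^ k = β ^ k • A ^ k := fun k => smul_pow β A k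
  set N : Matrix (Fin n) (Fin n) ℝ := ∑ k ∈ Finset.range (m + 1), B ^ k with hN
  have hNapp : ∀ j i, N j i = ∑ k ∈ Finset.range (m + 1), β ^ k * (A ^ k) j i := by
    intro j i
    rw [hN, Matrix.sum_apply]
    refine Finset.sum_congr rfl fun k _ => ?_
    rw [hBk k, Matrix.smul_apply, smul_eq_mul]
  have hBnil : B ^ (m + 1) = 0 := by
    rw [hBk, hnil, smul_zero]
  have hgeom : (1 - B) * N = 1 := by
    have h := mul_geom_sum B (m + 1)
    rw [hBnil] at h
    rw [← neg_sub B 1, neg_mul, h]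
    simp
  -- p j = ∑ i, N j i
  have hp' : ∀ j, p j = ∑ i, N j i := by
    intro j
    rw [hp j]
    simp only [Matrix.mulVec, dotProduct, mul_one, Finset.mul_sum]
    rw [Finset.sum_comm]
    exact Finset.sum_congr rfl fun i _ => (hNapp j i).symm
  -- q i = ∑ j, N j i
  have hq' : ∀ i, q i = ∑ j, N j i := by
    intro i
    rw [hq i]
    simp only [Matrix.mulVec, dotProduct, mul_one, Finset.mul_sum, ← Matrix.transpose_pow,
      Matrix.transpose_apply]
    rw [Finset.sum_comm]
    exact Finset.sum_congr rfl fun j _ => (hNapp j i).symm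
  -- x = N *ᵥ v
  set v : Fin n → ℝ := fun i => Γ - θ i / (1 + δ) with hv
  have hx' : x = N.mulVec v := by
    funext j
    rw [hx j]
    simp only [Matrix.mulVec, dotProduct, hv]
    calc -∑ i : Fin n, θ i / (1 + δ) * ∑ k ∈ Finset.range (m + 1), β ^ k * (A ^ k) j i + p j * Γ
        = -∑ i : Fin n, N j i * (θ i / (1 + δ)) + (∑ i, N j i) * Γ := by
          rw [hp' j]
          congr 1
          · congr 1
            exact Finset.sum_congr rfl fun i _ => by rw [hNapp j i]; ring
      _ = ∑ i : Fin n, N j i * (Γ - θ i / (1 + δ)) := by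
          rw [Finset.sum_mul, ← Finset.sum_neg_distrib, ← Finset.sum_add_distrib]
          exact Finset.sum_congr rfl fun i _ => by ring
  -- W in matrix form
  have hAdiag : ∀ i, A i i = 0 := by
    intro i
    rw [hA]
    simp only [ite_eq_right_iff]
    intro h
    exact absurd (Relation.TransGen.single h) (hacyc i)
  set J : Matrix (Fin n) (Fin n) ℝ := Matrix.of (fun _ _ => (1:ℝ)) with hJ
  have hW2 : W = (1 + δ) • (1 - B) - (1 + δ) • J := by
    ext i j
    simp only [Matrix.sub_apply, Matrix.smul_apply, Matrix.sub_apply, Matrix.one_apply,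
      Matrix.smul_apply, hB, Matrix.smul_apply, hJ, Matrix.of_apply, smul_eq_mul, hW, hA, hβ]
    by_cases hij : i = j
    · subst hij
      have hEii : ¬ E i i := fun h => hacyc i (Relation.TransGen.single h)
      simp [hEii]
    · by_cases hE : E j i
      · simp only [hij, if_false, hE, if_true]
        field_simp
        ring
      · simp only [hij, if_false, hE, if_false]
        ring
  -- main computation
  have hMx : (1 - B).mulVec x = v := by
    rw [hx', Matrix.mulVec_mulVec, hgeom, Matrix.one_mulVec]
  have hJx : J.mulVec x = fun _ => ∑ i, x i := by
    funext j
    simp [hJ, Matrix.mulVec, dotProduct]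
  have hsx : ∑ i, x i = (∑ i, p i) * Γ - (∑ i, θ i * q i) / (1 + δ) := by
    have h1 : ∑ i, x i = ∑ i, q i * v i := by
      rw [hx']
      simp only [Matrix.mulVec, dotProduct]
      rw [Finset.sum_comm]
      exact Finset.sum_congr rfl fun i _ => by rw [hq' i, Finset.sum_mul]
    have h2 : ∑ i, q i = ∑ j, p j := by
      rw [Finset.sum_congr rfl fun i (_ : i ∈ Finset.univ) => hq' i,
        Finset.sum_comm]
      exact (Finset.sum_congr rfl fun j _ => (hp' j).symm)
    rw [h1]
    simp only [hv, mul_sub]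
    rw [Finset.sum_sub_distrib, ← Finset.sum_mul, h2, Finset.sum_div]
    congr 1
    exact Finset.sum_congr rfl fun i _ => by ring
  have hΓ2 : (∑ i, θ i * q i) = Γ * ((1 + δ) * (-1 + ∑ i, p i)) := by
    rw [hΓ]
    field_simp
  funext j
  have : W.mulVec x = (1 + δ) • ((1 - B).mulVec x) - (1 + δ) • (J.mulVec x) := by
    rw [hW2, Matrix.sub_mulVec, Matrix.smul_mulVec, Matrix.smul_mulVec]
  rw [this]
  simp only [Pi.sub_apply, Pi.smul_apply, hMx, hJx, smul_eq_mul, Pi.neg_apply, hv]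
  rw [hsx]
  have hT := hΓ2
  field_simp
  linarith [hT]
end
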